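/- arXiv:1301.6667 — 6 statements merged into one kernel-verified Lean document; each statement's English description precedes it below -/
import Mathlib

section
/- Let S be a set of 2n points on the unit circle in the plane, closed under the antipodal map p ↦ -p. If P is an antipodal polygon on S whose vertices all lie in a closed half-plane bounded by a line through the origin (a thin antipodal polygon), then the origin does not lie in the interior of P; conversely, if the vertices of an antipodal polygon do not all lie in one such closed half-plane, then the origin lies in the interior of P. -/
open MeasureTheory

/-- The point on the unit circle at angle `θ`. -/
noncomputable def pt (θ : ℝ) : ℝ × ℝ := (Real.cos θ, Real.sin θ)

/-- Standard dot product in the plane. -/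
noncomputable def dotp (v w : ℝ × ℝ) : ℝ := v.1 * w.1 + v.2 * w.2

/-- Given angles `θ : Fin n → ℝ` (determining the antipodal point set
`{pt (θ i)} ∪ {-pt (θ i)}`) and a selection `ε`, the `i`-th vertex of the
corresponding antipodal polygon: `pt (θ i)` if `ε i` and `-pt (θ i)` otherwise. -/
noncomputable def vtx {n : ℕ} (θ : Fin n → ℝ) (ε : Fin n → Bool) (i : Fin n) : ℝ × ℝ :=
  if ε i then pt (θ i) else -pt (θ i)

/-- The antipodal polygon determined by the selection `ε`. -/
noncomputable def apoly {n : ℕ} (θ : Fin n → ℝ) (ε : Fin n → Bool) : Set (ℝ × ℝ) :=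
  convexHull ℝ (Set.range (vtx θ ε))

/-- The antipodal polygon is thin: all vertices lie in a closed half-plane
bounded by a line through the origin. -/
def Thin {n : ℕ} (θ : Fin n → ℝ) (ε : Fin n → Bool) : Prop :=
  ∃ v : ℝ × ℝ, v ≠ 0 ∧ ∀ i, 0 ≤ dotp v (vtx θ ε i)

/-- The antipodal polygon is thick: every open half-plane bounded by a line
through the origin contains at least `⌈(n-2)/2⌉ = (n-1)/2` of its vertices. -/
def Thick {n : ℕ} (θ : Fin n → ℝ) (ε : Fin n → Bool) : Prop :=
  ∀ v : ℝ × ℝ, v ≠ 0 →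
    (n - 1) / 2 ≤ Set.ncard {i : Fin n | 0 < dotp v (vtx θ ε i)}

/-- The `j`-th point (indices mod `2*n`) of the antipodal point set in circular
order `pt (θ 0), …, pt (θ (n-1)), -pt (θ 0), …, -pt (θ (n-1))`. -/
noncomputable def spt {n : ℕ} (θ : Fin n → ℝ) (j : ℕ) : ℝ × ℝ :=
  if h : j % (2 * n) < n then pt (θ ⟨j % (2 * n), h⟩)
  else if h2 : j % (2 * n) - n < n then -pt (θ ⟨j % (2 * n) - n, h2⟩) else 0

/-- Whether the `j`-th point (indices mod `2*n`) of the antipodal point set, in the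
circular order `pt (θ 0), …, pt (θ (n-1)), -pt (θ 0), …, -pt (θ (n-1))`,
is a vertex of the antipodal polygon selected by `ε`. -/
def chosen {n : ℕ} (ε : Fin n → Bool) (j : ℕ) : Bool :=
  if h : j % (2 * n) < n then ε ⟨j % (2 * n), h⟩
  else if h2 : j % (2 * n) - n < n then !(ε ⟨j % (2 * n) - n, h2⟩) else false

/-!
The polygon is thin exactly when some nonzero linear functional is nonnegative on all its
vertices, equivalently on the whole polygon. For a convex set `C` in a finite-dimensional space,
a point fails to be interior exactly when some nonzero functional attains its minimum over `C`
there: if `C` has interior this is a supporting hyperplane (Hahn–Banach), and otherwise `C` lies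
in a proper affine subspace, on which a nonzero functional is constant.
-/

section

variable {E : Type*} [NormedAddCommGroup E] [NormedSpace ℝ E] {C : Set E} {x : E}

theorem exists_lt_of_mem_interior {f : StrongDual ℝ E} (hf : f ≠ 0) (hx : x ∈ interior C) :
    ∃ y ∈ C, f y < f x := by
  have himage : f '' interior C ∈ nhds (f x) :=
    (f.isOpenMap_of_ne_zero hf _ isOpen_interior).mem_nhds (Set.mem_image_of_mem f hx)
  obtain ⟨t, ⟨y, hy, rfl⟩, hlt⟩ := Filter.nonempty_of_mem
    (Filter.inter_mem (nhdsWithin_le_nhds himage) (self_mem_nhdsWithin (s := Set.Iio (f x))))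
  exact ⟨y, interior_subset hy, hlt⟩

variable [FiniteDimensional ℝ E] [Nontrivial E]

theorem Convex.exists_dual_const_of_interior_eq_empty (hC : Convex ℝ C) (hint : interior C = ∅) :
    ∃ f : StrongDual ℝ E, f ≠ 0 ∧ ∀ a ∈ C, ∀ b ∈ C, f a = f b := by
  have hspan : vectorSpan ℝ C < ⊤ := by
    refine lt_top_iff_ne_top.mpr fun htop => ?_
    obtain rfl | hne := C.eq_empty_or_nonempty
    · simp at htop
    · rw [← AffineSubspace.affineSpan_eq_top_iff_vectorSpan_eq_top_of_nonempty ℝ E E hne,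
        ← hC.interior_nonempty_iff_affineSpan_eq_top, hint] at htop
      exact Set.not_nonempty_empty htop
  obtain ⟨f, hf, hker⟩ := (vectorSpan ℝ C).exists_le_ker_of_lt_top hspan
  refine ⟨LinearMap.toContinuousLinearMap f, by simpa using hf, fun a ha b hb => ?_⟩
  simpa [sub_eq_zero] using hker (vsub_mem_vectorSpan ℝ ha hb)

theorem Convex.exists_dual_le_of_notMem_interior (hC : Convex ℝ C) (hx : x ∉ interior C) :
    ∃ f : StrongDual ℝ E, f ≠ 0 ∧ ∀ y ∈ C, f x ≤ f y := by
  obtain hint | hint := (interior C).eq_empty_or_nonempty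
  · obtain ⟨f, hf, hconst⟩ := hC.exists_dual_const_of_interior_eq_empty hint
    by_cases hle : ∀ y ∈ C, f x ≤ f y
    · exact ⟨f, hf, hle⟩
    · obtain ⟨b, hb, hlt⟩ : ∃ b ∈ C, f b < f x := by simpa using hle
      exact ⟨-f, neg_ne_zero.mpr hf, fun y hy => by simp [hconst y hy b hb, hlt.le]⟩
  · obtain ⟨f, hf, hmax⟩ := geometric_hahn_banach_of_nonempty_interior_point hC hx hint
    exact ⟨-f, neg_ne_zero.mpr hf, fun y hy => by simpa using hmax y hy⟩

theorem Convex.mem_interior_iff_forall_exists_lt (hC : Convex ℝ C) :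
    x ∈ interior C ↔ ∀ f : StrongDual ℝ E, f ≠ 0 → ∃ y ∈ C, f y < f x := by
  refine ⟨fun hx f hf => exists_lt_of_mem_interior hf hx, fun h => ?_⟩
  by_contra hx
  obtain ⟨f, hf, hmin⟩ := hC.exists_dual_le_of_notMem_interior hx
  obtain ⟨y, hy, hlt⟩ := h f hf
  exact (hmin y hy).not_gt hlt

end

theorem forall_mem_convexHull_nonneg_iff {E F : Type*} [AddCommGroup E] [Module ℝ E]
    [FunLike F E ℝ] [LinearMapClass F ℝ E ℝ] (f : F) (s : Set E) :
    (∀ y ∈ convexHull ℝ s, 0 ≤ f y) ↔ ∀ y ∈ s, 0 ≤ f y :=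
  ⟨fun h y hy => h y (subset_convexHull ℝ s hy),
    fun h => convexHull_min h (convex_halfSpace_ge (f : E →ₗ[ℝ] ℝ).isLinear 0)⟩

noncomputable def dotpCLM (v : ℝ × ℝ) : StrongDual ℝ (ℝ × ℝ) :=
  v.1 • ContinuousLinearMap.fst ℝ ℝ ℝ + v.2 • ContinuousLinearMap.snd ℝ ℝ ℝ

@[simp]
theorem dotpCLM_apply (v x : ℝ × ℝ) : dotpCLM v x = dotp v x := rfl

theorem dotpCLM_surjective : Function.Surjective dotpCLM := by
  intro f
  refine ⟨(f (1, 0), f (0, 1)), ContinuousLinearMap.ext fun x => ?_⟩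
  have hx : x = x.1 • ((1 : ℝ), (0 : ℝ)) + x.2 • ((0 : ℝ), (1 : ℝ)) := by ext <;> simp
  rw [dotpCLM_apply, dotp, hx, map_add, map_smul, map_smul]
  simp [mul_comm]

theorem dotpCLM_eq_zero_iff {v : ℝ × ℝ} : dotpCLM v = 0 ↔ v = 0 := by
  refine ⟨fun h => Prod.ext ?_ ?_, fun h => ContinuousLinearMap.ext fun x => by simp [h, dotp]⟩
  · simpa [dotp] using DFunLike.congr_fun h (1, 0)
  · simpa [dotp] using DFunLike.congr_fun h (0, 1)

theorem thin_iff_exists_dual {n : ℕ} (θ : Fin n → ℝ) (ε : Fin n → Bool) :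
    Thin θ ε ↔ ∃ f : StrongDual ℝ (ℝ × ℝ), f ≠ 0 ∧ ∀ y ∈ apoly θ ε, f 0 ≤ f y := by
  simp only [map_zero, apoly, forall_mem_convexHull_nonneg_iff, Set.forall_mem_range]
  refine ⟨fun ⟨v, hv, h⟩ => ⟨dotpCLM v, dotpCLM_eq_zero_iff.not.mpr hv, h⟩, ?_⟩
  rintro ⟨f, hf, h⟩
  obtain ⟨v, rfl⟩ := dotpCLM_surjective f
  exact ⟨v, dotpCLM_eq_zero_iff.not.mp hf, h⟩

theorem convex_apoly {n : ℕ} (θ : Fin n → ℝ) (ε : Fin n → Bool) : Convex ℝ (apoly θ ε) :=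
  convex_convexHull ℝ _

theorem stmt_0_general (n : ℕ) (θ : Fin n → ℝ) (ε : Fin n → Bool) :
    (Thin θ ε → (0 : ℝ × ℝ) ∉ interior (apoly θ ε)) ∧
    (¬ Thin θ ε → (0 : ℝ × ℝ) ∈ interior (apoly θ ε)) := by
  have key : Thin θ ε ↔ (0 : ℝ × ℝ) ∉ interior (apoly θ ε) := by
    rw [thin_iff_exists_dual, (convex_apoly θ ε).mem_interior_iff_forall_exists_lt]
    simp only [not_forall, not_exists, not_and, not_lt, exists_prop]
  exact ⟨key.mp, not_imp_comm.mp key.mpr⟩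

/-- A thin antipodal polygon does not contain the origin in its interior;
a non-thin antipodal polygon contains the origin in its interior. -/
theorem stmt_0 (n : ℕ) (θ : Fin n → ℝ) (hmono : StrictMono θ)
    (hrange : ∀ i, θ i ∈ Set.Ico 0 Real.pi) (ε : Fin n → Bool) :
    (Thin θ ε → (0 : ℝ × ℝ) ∉ interior (apoly θ ε)) ∧
    (¬ Thin θ ε → (0 : ℝ × ℝ) ∈ interior (apoly θ ε)) :=
  stmt_0_general n θ ε
end

section
/- Let S be an antipodal point set of 2n points on the unit circle, let p ∈ S, and let ℓ be the line through p and -p (which passes through the origin). Among all triangles having p as a vertex and one vertex of S in each of the two open half-planes determined by ℓ, the triangle formed by p together with its two angular neighbors in S (one on each side of ℓ) has strictly the smallest area. -/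
open MeasureTheory
open scoped Pointwise

/-- Cross product (determinant) of two plane vectors; `crossp p x` is positive,
zero, or negative according to which side of the line through `p` and `-p`
the point `x` lies on. -/
noncomputable def crossp (v w : ℝ × ℝ) : ℝ := v.1 * w.2 - v.2 * w.1

/-!
For unit vectors `x`, `y` on opposite sides of the line through `±p`, twice the area of the
triangle `p x y` depends only on `α = ⟪p, x⟫` and `β = ⟪p, y⟫`: it is
`F(α, β) = (1 - α) √(1 - β²) + (1 - β) √(1 - α²)` (`twiceArea`). This function is symmetric
and strictly decreasing in each variable on the region `α + β ≥ 0`. The neighbours `a`, `b` maximise `α`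
and `β` on their sides, and antipodality gives `⟪p, a⟫ ≥ -⟪p, y⟫` and `⟪p, b⟫ ≥ -⟪p, x⟫`.
If `α + β ≥ 0` this keeps the comparison with `F(⟪p, a⟫, ⟪p, b⟫)` inside the monotone region;
otherwise `F(α, β) > F(α, -α)`, which dominates `F(⟪p, a⟫, ⟪p, b⟫)` by monotonicity again.
-/

noncomputable def twiceArea (α β : ℝ) : ℝ :=
  (1 - α) * √(1 - β ^ 2) + (1 - β) * √(1 - α ^ 2)

lemma twiceArea_comm (α β : ℝ) : twiceArea α β = twiceArea β α := by
  rw [twiceArea, twiceArea]; ring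

lemma twiceArea_self_neg (α : ℝ) : twiceArea α (-α) = 2 * √(1 - α ^ 2) := by
  rw [twiceArea, neg_sq]; ring

lemma twiceArea_nonneg {α β : ℝ} (hα : α ≤ 1) (hβ : β ≤ 1) : 0 ≤ twiceArea α β := by
  unfold twiceArea
  have := Real.sqrt_nonneg (1 - β ^ 2)
  have := Real.sqrt_nonneg (1 - α ^ 2)
  nlinarith

lemma sq_sqrt_one_sub_sq {α : ℝ} (h1 : -1 < α) (h2 : α < 1) : √(1 - α ^ 2) ^ 2 = 1 - α ^ 2 :=
  Real.sq_sqrt (by nlinarith)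

lemma sqrt_one_sub_sq_pos {α : ℝ} (h1 : -1 < α) (h2 : α < 1) : 0 < √(1 - α ^ 2) :=
  Real.sqrt_pos.mpr (by nlinarith)

lemma sqrt_mul_sqrt_add_mul_pos {β γ : ℝ} (hβ : β < 1) (hγ : γ < 1) (h : -β ≤ γ) :
    0 < √(1 - β ^ 2) * √(1 - γ ^ 2) + (1 - β) * γ := by
  have hsβ := sqrt_one_sub_sq_pos (by linarith) hβ
  have hsγ := sqrt_one_sub_sq_pos (by linarith) hγ
  rcases le_or_gt 0 γ with hγ0 | hγ0
  · nlinarith [mul_pos hsβ hsγ]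
  · have hle : √(1 - β ^ 2) ≤ √(1 - γ ^ 2) := Real.sqrt_le_sqrt (by nlinarith)
    have := sq_sqrt_one_sub_sq (by linarith) hβ
    nlinarith [mul_le_mul_of_nonneg_left hle hsβ.le]

lemma strictAntiOn_twiceArea_left {β : ℝ} (hβ : β < 1) :
    StrictAntiOn (twiceArea · β) (Set.Ico (-β) 1) := by
  intro α ⟨hα₀, hα₁⟩ α' ⟨_, hα'₁⟩ hlt
  simp only [twiceArea]
  have h1 := sq_sqrt_one_sub_sq (by linarith) hα₁
  have h2 := sq_sqrt_one_sub_sq (by linarith) hα'₁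
  have hS : 0 < √(1 - α ^ 2) + √(1 - α' ^ 2) := by
    linarith [sqrt_one_sub_sq_pos (by linarith) hα₁, sqrt_one_sub_sq_pos (by linarith) hα'₁]
  have hT := sqrt_mul_sqrt_add_mul_pos hβ hα₁ hα₀
  have hT' := sqrt_mul_sqrt_add_mul_pos hβ hα'₁ (by linarith)
  -- rationalising by `√(1 - α²) + √(1 - α'²)` leaves `α' - α` times a positive factor
  have key : ((1 - α) * √(1 - β ^ 2) + (1 - β) * √(1 - α ^ 2)
        - ((1 - α') * √(1 - β ^ 2) + (1 - β) * √(1 - α' ^ 2))) * (√(1 - α ^ 2) + √(1 - α' ^ 2))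
      = (α' - α) * ((√(1 - β ^ 2) * √(1 - α ^ 2) + (1 - β) * α)
          + (√(1 - β ^ 2) * √(1 - α' ^ 2) + (1 - β) * α')) := by
    linear_combination (1 - β) * h1 - (1 - β) * h2
  nlinarith [mul_pos (sub_pos.mpr hlt) (add_pos hT hT')]

lemma strictAntiOn_twiceArea_right {α : ℝ} (hα : α < 1) :
    StrictAntiOn (twiceArea α) (Set.Ico (-α) 1) := by
  simpa only [twiceArea_comm _ α] using strictAntiOn_twiceArea_left hα

lemma twiceArea_self_neg_lt {α β : ℝ} (hα : -1 < α) (hβ : -1 < β) (h : α + β < 0) :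
    twiceArea α (-α) < twiceArea α β := by
  rw [twiceArea_self_neg, twiceArea]
  have h1 := sq_sqrt_one_sub_sq hα (by linarith)
  have h2 := sq_sqrt_one_sub_sq hβ (by linarith)
  have hsα := sqrt_one_sub_sq_pos hα (by linarith)
  have hsβ := sqrt_one_sub_sq_pos hβ (by linarith)
  have key : ((1 - α) * √(1 - β ^ 2) - (1 + β) * √(1 - α ^ 2))
        * ((1 - α) * √(1 - β ^ 2) + (1 + β) * √(1 - α ^ 2))
      = (-2) * (α + β) * (1 - α) * (1 + β) := by
    linear_combination (1 - α) ^ 2 * h2 - (1 + β) ^ 2 * h1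
  have hsum : 0 < (1 - α) * √(1 - β ^ 2) + (1 + β) * √(1 - α ^ 2) := by nlinarith
  have hprod : 0 < (-2) * (α + β) * (1 - α) * (1 + β) := by
    have := mul_pos (mul_pos (neg_pos.mpr h) (sub_pos.mpr (by linarith : α < 1)))
      (neg_lt_iff_pos_add'.mp hβ)
    linarith
  nlinarith

lemma twiceArea_lt_twiceArea {α β α₀ β₀ : ℝ} (hα : -1 < α) (hβ : -1 < β)
    (hα₀ : α₀ < 1) (hβ₀ : β₀ < 1) (hαα₀ : α ≤ α₀) (hββ₀ : β ≤ β₀)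
    (hα₀β : -β ≤ α₀) (hαβ₀ : -α ≤ β₀) (hne : ¬(α = α₀ ∧ β = β₀)) :
    twiceArea α₀ β₀ < twiceArea α β := by
  rcases le_or_gt 0 (α + β) with hαβ | hαβ
  · have hβ_mem : β ∈ Set.Ico (-α₀) 1 := ⟨by linarith, by linarith⟩
    have hβ₀_mem : β₀ ∈ Set.Ico (-α₀) 1 := ⟨by linarith, hβ₀⟩
    have hα_mem : α ∈ Set.Ico (-β) 1 := ⟨by linarith, by linarith⟩
    have hα₀_mem : α₀ ∈ Set.Ico (-β) 1 := ⟨by linarith, hα₀⟩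
    rcases eq_or_lt_of_le hββ₀ with rfl | hlt
    · exact strictAntiOn_twiceArea_left hβ₀ hα_mem hα₀_mem
        (lt_of_le_of_ne hαα₀ fun h => hne ⟨h, rfl⟩)
    · calc twiceArea α₀ β₀ < twiceArea α₀ β :=
            strictAntiOn_twiceArea_right hα₀ hβ_mem hβ₀_mem hlt
        _ ≤ twiceArea α β :=
            (strictAntiOn_twiceArea_left (by linarith)).antitoneOn hα_mem hα₀_mem hαα₀
  · calc twiceArea α₀ β₀ ≤ twiceArea α₀ (-α) :=
          (strictAntiOn_twiceArea_right hα₀).antitoneOn ⟨by linarith, by linarith⟩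
            ⟨by linarith, hβ₀⟩ (by linarith)
      _ ≤ twiceArea α (-α) :=
          (strictAntiOn_twiceArea_left (by linarith)).antitoneOn ⟨by linarith, by linarith⟩
            ⟨by linarith, hα₀⟩ hαα₀
      _ < twiceArea α β := twiceArea_self_neg_lt hα hβ hαβ

lemma crossp_neg_right (p q : ℝ × ℝ) : crossp p (-q) = -crossp p q := by
  simp only [crossp, Prod.fst_neg, Prod.snd_neg]; ring

lemma dotp_neg_right (p q : ℝ × ℝ) : dotp p (-q) = -dotp p q := by
  simp only [dotp, Prod.fst_neg, Prod.snd_neg]; ring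

lemma crossp_sq_add_dotp_sq {p q : ℝ × ℝ} (hp : p.1 ^ 2 + p.2 ^ 2 = 1)
    (hq : q.1 ^ 2 + q.2 ^ 2 = 1) : crossp p q ^ 2 + dotp p q ^ 2 = 1 := by
  simp only [crossp, dotp]
  linear_combination (q.1 ^ 2 + q.2 ^ 2) * hp + hq

lemma abs_dotp_lt_one {p q : ℝ × ℝ} (hp : p.1 ^ 2 + p.2 ^ 2 = 1)
    (hq : q.1 ^ 2 + q.2 ^ 2 = 1) (hc : crossp p q ≠ 0) : |dotp p q| < 1 := by
  refine (sq_lt_one_iff_abs_lt_one _).mp ?_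
  nlinarith [crossp_sq_add_dotp_sq hp hq, pow_pos (abs_pos.mpr hc) 2, sq_abs (crossp p q)]

lemma abs_crossp_eq_sqrt {p q : ℝ × ℝ} (hp : p.1 ^ 2 + p.2 ^ 2 = 1)
    (hq : q.1 ^ 2 + q.2 ^ 2 = 1) : |crossp p q| = √(1 - dotp p q ^ 2) := by
  rw [← Real.sqrt_sq_eq_abs, ← crossp_sq_add_dotp_sq hp hq, add_sub_cancel_right]

lemma crossp_sub_sub {p x y : ℝ × ℝ} (hp : p.1 ^ 2 + p.2 ^ 2 = 1) :
    crossp (x - p) (y - p) = (1 - dotp p x) * -crossp p y + crossp p x * (1 - dotp p y) := by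
  simp only [crossp, dotp, Prod.fst_sub, Prod.snd_sub]
  linear_combination (y.1 * x.2 - x.1 * y.2) * hp

lemma crossp_sub_sub_eq_twiceArea {p x y : ℝ × ℝ} (hp : p.1 ^ 2 + p.2 ^ 2 = 1)
    (hx : x.1 ^ 2 + x.2 ^ 2 = 1) (hy : y.1 ^ 2 + y.2 ^ 2 = 1)
    (hxside : 0 < crossp p x) (hyside : crossp p y < 0) :
    crossp (x - p) (y - p) = twiceArea (dotp p x) (dotp p y) := by
  rw [crossp_sub_sub hp, twiceArea, ← abs_crossp_eq_sqrt hp hx, ← abs_crossp_eq_sqrt hp hy,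
    abs_of_pos hxside, abs_of_neg hyside]
  ring

lemma eq_of_dotp_eq_of_crossp_eq {p x y : ℝ × ℝ} (hp : p.1 ^ 2 + p.2 ^ 2 = 1)
    (hd : dotp p x = dotp p y) (hc : crossp p x = crossp p y) : x = y := by
  simp only [dotp, crossp] at hd hc
  ext
  · linear_combination p.1 * hd - p.2 * hc - (x.1 - y.1) * hp
  · linear_combination p.2 * hd + p.1 * hc - (x.2 - y.2) * hp

lemma eq_of_dotp_eq_of_crossp_mul_pos {p x y : ℝ × ℝ} (hp : p.1 ^ 2 + p.2 ^ 2 = 1)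
    (hx : x.1 ^ 2 + x.2 ^ 2 = 1) (hy : y.1 ^ 2 + y.2 ^ 2 = 1)
    (hside : 0 < crossp p x * crossp p y) (hd : dotp p x = dotp p y) : x = y := by
  refine eq_of_dotp_eq_of_crossp_eq hp hd ?_
  have habs : |crossp p x| = |crossp p y| := by
    rw [abs_crossp_eq_sqrt hp hx, abs_crossp_eq_sqrt hp hy, hd]
  rcases abs_eq_abs.mp habs with h | h
  · exact h
  · nlinarith [sq_nonneg (crossp p y)]

def stdTriangle : Set (ℝ × ℝ) := convexHull ℝ {(0, 0), (1, 0), (0, 1)}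

lemma volume_stdTriangle_pos : 0 < volume stdTriangle := by
  have hsub : Set.Icc (0 : ℝ) (1 / 2) ×ˢ Set.Icc (0 : ℝ) (1 / 2) ⊆ stdTriangle := by
    rintro ⟨z₁, z₂⟩ ⟨⟨hz₁, hz₁'⟩, ⟨hz₂, hz₂'⟩⟩
    have hw : ∑ i, ![1 - z₁ - z₂, z₁, z₂] i = 1 := by
      simp only [Fin.sum_univ_three, Matrix.cons_val]; ring
    have hmem := Finset.centerMass_mem_convexHull (s := {(0, 0), (1, 0), (0, 1)}) Finset.univ
      (w := ![1 - z₁ - z₂, z₁, z₂]) (z := ![((0 : ℝ), (0 : ℝ)), (1, 0), (0, 1)])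
      (fun i _ => by fin_cases i <;> simp only [Fin.zero_eta, Fin.mk_one, Fin.reduceFinMk,
        Matrix.cons_val_zero, Matrix.cons_val_one, Matrix.cons_val] <;> linarith)
      (by rw [hw]; exact one_pos) (fun i _ => by fin_cases i <;> simp)
    rw [Finset.centerMass_eq_of_sum_1 _ _ hw] at hmem
    unfold stdTriangle
    convert hmem using 1
    simp [Fin.sum_univ_three]
  refine lt_of_lt_of_le ?_ (measure_mono hsub)
  rw [Measure.volume_eq_prod, Measure.prod_prod]
  simp [Real.volume_Icc]

lemma volume_stdTriangle_lt_top : volume stdTriangle < ⊤ :=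
  ((Set.toFinite _).isCompact_convexHull ℝ).measure_lt_top

lemma volume_convexHull_triangle (p q r : ℝ × ℝ) :
    volume (convexHull ℝ ({p, q, r} : Set (ℝ × ℝ)))
      = ENNReal.ofReal |crossp (q - p) (r - p)| * volume stdTriangle := by
  set f := Matrix.toLin (Module.Basis.finTwoProd ℝ) (Module.Basis.finTwoProd ℝ)
    !![(q - p).1, (r - p).1; (q - p).2, (r - p).2]
  have himg : f '' {((0 : ℝ), (0 : ℝ)), (1, 0), (0, 1)} = ({0, q - p, r - p} : Set (ℝ × ℝ)) := by
    simp only [f, Set.image_insert_eq, Set.image_singleton, Matrix.toLin_finTwoProd_apply,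
      mul_zero, mul_one, add_zero, zero_add, Prod.mk_zero_zero]
  have htr : ({p, q, r} : Set (ℝ × ℝ)) = p +ᵥ ({0, q - p, r - p} : Set (ℝ × ℝ)) := by
    simp [Set.vadd_set_insert]
  rw [htr, convexHull_vadd, measure_vadd, ← himg, ← LinearMap.image_convexHull,
    Measure.addHaar_image_linearMap, LinearMap.det_toLin, Matrix.det_fin_two_of, crossp,
    stdTriangle]
  ring_nf

lemma volume_convexHull_triangle_lt {p q r p' q' r' : ℝ × ℝ}
    (h₀ : 0 ≤ crossp (q - p) (r - p)) (h : crossp (q - p) (r - p) < crossp (q' - p') (r' - p')) :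
    volume (convexHull ℝ ({p, q, r} : Set (ℝ × ℝ)))
      < volume (convexHull ℝ ({p', q', r'} : Set (ℝ × ℝ))) := by
  rw [volume_convexHull_triangle, volume_convexHull_triangle, abs_of_nonneg h₀,
    abs_of_nonneg (h₀.trans h.le)]
  exact ENNReal.mul_lt_mul_left volume_stdTriangle_pos.ne' volume_stdTriangle_lt_top.ne
    ((ENNReal.ofReal_lt_ofReal_iff (h₀.trans_lt h)).mpr h)

/-- Let S be an antipodal point set on the unit circle, p ∈ S, and ℓ the line
through p and -p. Among triangles with vertex p and one vertex of S in each of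
the two open half-planes of ℓ, the triangle `p a b` formed with the two angular
neighbors `a`, `b` of `p` (the points maximizing the dot product with `p` on
each side of ℓ) has strictly the smallest area. -/
theorem stmt_1 (S : Finset (ℝ × ℝ))
    (hcirc : ∀ q ∈ S, q.1 ^ 2 + q.2 ^ 2 = 1)
    (hanti : ∀ q ∈ S, -q ∈ S)
    (p a b x y : ℝ × ℝ)
    (hp : p ∈ S) (ha : a ∈ S) (hb : b ∈ S) (hx : x ∈ S) (hy : y ∈ S)
    (haside : 0 < crossp p a) (hbside : crossp p b < 0)
    (haneigh : ∀ r ∈ S, 0 < crossp p r → dotp p r ≤ dotp p a)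
    (hbneigh : ∀ r ∈ S, crossp p r < 0 → dotp p r ≤ dotp p b)
    (hxside : 0 < crossp p x) (hyside : crossp p y < 0)
    (hne : ¬ (x = a ∧ y = b)) :
    volume (convexHull ℝ ({p, a, b} : Set (ℝ × ℝ))) <
      volume (convexHull ℝ ({p, x, y} : Set (ℝ × ℝ))) := by
  have hpu := hcirc p hp
  have hay : -dotp p y ≤ dotp p a := by
    simpa only [dotp_neg_right] using
      haneigh (-y) (hanti y hy) (by rw [crossp_neg_right]; linarith)
  have hxb : -dotp p x ≤ dotp p b := by
    simpa only [dotp_neg_right] using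
      hbneigh (-x) (hanti x hx) (by rw [crossp_neg_right]; linarith)
  have hne' : ¬(dotp p x = dotp p a ∧ dotp p y = dotp p b) := fun ⟨hxa, hyb⟩ =>
    hne ⟨eq_of_dotp_eq_of_crossp_mul_pos hpu (hcirc x hx) (hcirc a ha)
        (mul_pos hxside haside) hxa,
      eq_of_dotp_eq_of_crossp_mul_pos hpu (hcirc y hy) (hcirc b hb)
        (mul_pos_of_neg_of_neg hyside hbside) hyb⟩
  have hdot {q} (hq : q ∈ S) (hc : crossp p q ≠ 0) :=
    abs_lt.mp (abs_dotp_lt_one hpu (hcirc q hq) hc)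
  have hab := crossp_sub_sub_eq_twiceArea hpu (hcirc a ha) (hcirc b hb) haside hbside
  have hxy := crossp_sub_sub_eq_twiceArea hpu (hcirc x hx) (hcirc y hy) hxside hyside
  refine volume_convexHull_triangle_lt ?_ ?_ <;> rw [hab]
  · exact twiceArea_nonneg (hdot ha haside.ne').2.le (hdot hb hbside.ne).2.le
  · rw [hxy]
    exact twiceArea_lt_twiceArea (hdot hx hxside.ne').1 (hdot hy hyside.ne).1
      (hdot ha haside.ne').2 (hdot hb hbside.ne).2 (haneigh x hx hxside) (hbneigh y hy hyside)
      hay hxb hne'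
end

section
/- Let p₂, p₃, p₄ be points on the unit circle appearing in this clockwise order within an open half-circle. Then Area(conv{p₂, p₄, -p₃}) = Area(conv{p₂, p₃, p₄, -p₂}). -/
open MeasureTheory
open Pointwise

lemma line_null (u : ℝ × ℝ) (k : ℝ) (hu : u ≠ 0) :
    volume {p : ℝ × ℝ | u.1 * p.1 + u.2 * p.2 = k} = 0 := by
  set g : (ℝ × ℝ) →ₗ[ℝ] ℝ :=
    { toFun := fun p => u.1 * p.1 + u.2 * p.2
      map_add' := by intro x y; simp; ring
      map_smul' := by intro m x; simp; ring }
  have hg : g u ≠ 0 := by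
    simp only [g, LinearMap.coe_mk, AddHom.coe_mk]
    intro h
    apply hu
    have h1 : u.1 = 0 ∧ u.2 = 0 := by constructor <;> nlinarith [sq_nonneg u.1, sq_nonneg u.2]
    exact Prod.ext h1.1 h1.2
  have hker : LinearMap.ker g ≠ ⊤ := by
    intro h
    exact hg (by simpa using LinearMap.congr_fun (LinearMap.ker_eq_top.mp h) u)
  set x₀ : ℝ × ℝ := (k / g u) • u with hx₀
  have hgx₀ : g x₀ = k := by
    simp [hx₀, _root_.map_smul]
    field_simp
  have hset : {p : ℝ × ℝ | u.1 * p.1 + u.2 * p.2 = k} =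
      (fun y => x₀ + y) '' (LinearMap.ker g : Set (ℝ × ℝ)) := by
    ext p
    simp only [Set.mem_setOf_eq, Set.image_add_left, Set.mem_preimage, SetLike.mem_coe,
      LinearMap.mem_ker, map_add, map_neg]
    have : g p = u.1 * p.1 + u.2 * p.2 := rfl
    constructor
    · intro h; rw [this, h, hgx₀]; ring
    · intro h; rw [← this]; linarith [h, hgx₀]
  rw [hset, Set.image_add_left, measure_preimage_add]
  exact Measure.addHaar_submodule volume _ hker

lemma mem_hull3 (A B C : ℝ × ℝ) {c1 c2 c3 : ℝ} (h1 : 0 ≤ c1) (h2 : 0 ≤ c2) (h3 : 0 ≤ c3)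
    (hs : c1 + c2 + c3 = 1) : c1 • A + c2 • B + c3 • C ∈ convexHull ℝ ({A, B, C} : Set (ℝ × ℝ)) := by
  have := Finset.centerMass_mem_convexHull (Finset.univ : Finset (Fin 3))
    (w := ![c1, c2, c3]) (z := ![A, B, C]) (s := ({A, B, C} : Set (ℝ × ℝ)))
    (by intro i _; fin_cases i <;> simpa)
    (by simp [Fin.sum_univ_three, hs]) (by intro i _; fin_cases i <;> simp)
  simpa [Finset.centerMass, Fin.sum_univ_three, hs] using this

lemma hull3_rep {A B C x : ℝ × ℝ} (hx : x ∈ convexHull ℝ ({A, B, C} : Set (ℝ × ℝ))) :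
    ∃ c1 c2 c3 : ℝ, 0 ≤ c1 ∧ 0 ≤ c2 ∧ 0 ≤ c3 ∧ c1 + c2 + c3 = 1 ∧
      x = c1 • A + c2 • B + c3 • C := by
  rw [convexHull_insert ⟨B, by simp⟩, convexHull_pair] at hx
  obtain ⟨y, hy, hxy⟩ := Set.mem_iUnion₂.mp hx
  obtain ⟨z, hz, hseg⟩ := Set.mem_iUnion₂.mp hxy
  rw [Set.mem_singleton_iff] at hy
  subst hy
  obtain ⟨u, v, hu, hv, huv, hz⟩ := hz
  obtain ⟨s, t, hs, ht, hst, hx⟩ := hseg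
  exact ⟨s, t * u, t * v, hs, by positivity, by positivity, by nlinarith,
    by rw [← hx, ← hz]; module⟩

lemma hull4_rep {A B C D x : ℝ × ℝ} (hx : x ∈ convexHull ℝ ({A, B, C, D} : Set (ℝ × ℝ))) :
    ∃ c1 c2 c3 c4 : ℝ, 0 ≤ c1 ∧ 0 ≤ c2 ∧ 0 ≤ c3 ∧ 0 ≤ c4 ∧ c1 + c2 + c3 + c4 = 1 ∧
      x = c1 • A + c2 • B + c3 • C + c4 • D := by
  rw [convexHull_insert ⟨B, by simp⟩] at hx
  obtain ⟨y, hy, hxy⟩ := Set.mem_iUnion₂.mp hx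
  obtain ⟨z, hz, hseg⟩ := Set.mem_iUnion₂.mp hxy
  rw [Set.mem_singleton_iff] at hy
  subst hy
  obtain ⟨c2', c3', c4', h2, h3, h4, hsum, hz⟩ := hull3_rep hz
  obtain ⟨s, t, hs, ht, hst, hx⟩ := hseg
  exact ⟨s, t * c2', t * c3', t * c4', hs, by positivity, by positivity, by positivity,
    by nlinarith, by rw [← hx, hz]; module⟩

lemma std_triangle_eq :
    convexHull ℝ ({(0,0), (1,0), (0,1)} : Set (ℝ × ℝ)) =
      {p : ℝ × ℝ | 0 ≤ p.1 ∧ 0 ≤ p.2 ∧ p.1 + p.2 ≤ 1} := by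
  apply Set.Subset.antisymm
  · apply convexHull_min
    · intro p hp
      simp only [Set.mem_insert_iff, Set.mem_singleton_iff] at hp
      rcases hp with h | h | h <;> subst h <;> norm_num
    · intro p hp q hq s t hs ht hst
      simp only [Set.mem_setOf_eq, Prod.fst_add, Prod.snd_add, Prod.smul_fst, Prod.smul_snd,
        smul_eq_mul] at *
      obtain ⟨hp1, hp2, hp3⟩ := hp; obtain ⟨hq1, hq2, hq3⟩ := hq
      exact ⟨by nlinarith, by nlinarith, by nlinarith⟩
  · intro p hp
    obtain ⟨h1, h2, h3⟩ := hp
    have : p = (1 - p.1 - p.2) • ((0:ℝ),(0:ℝ)) + p.1 • ((1:ℝ),(0:ℝ)) + p.2 • ((0:ℝ),(1:ℝ)) := by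
      ext <;> simp
    rw [this]
    exact mem_hull3 _ _ _ (by linarith) h1 h2 (by ring)

lemma std_triangle_vol :
    volume (convexHull ℝ ({(0,0), (1,0), (0,1)} : Set (ℝ × ℝ))) = ENNReal.ofReal (1/2) := by
  rw [std_triangle_eq]
  have hreg : volume (regionBetween (fun _ : ℝ => (0:ℝ)) (fun x => 1 - x) (Set.Icc 0 1)) =
      ENNReal.ofReal (1/2) := by
    rw [MeasureTheory.Measure.volume_eq_prod,
      volume_regionBetween_eq_integral (f := fun _ : ℝ => (0:ℝ)) (g := fun x : ℝ => 1 - x) (s := Set.Icc 0 1) (continuous_const.integrableOn_Icc)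
        ((continuous_const.sub continuous_id').integrableOn_Icc) measurableSet_Icc
        (fun x hx => by simp at hx ⊢; linarith [hx.2])]
    congr 1
    rw [show ((fun x : ℝ => 1 - x) - fun _ => (0:ℝ)) = (fun x : ℝ => 1 - x) by ext x; simp]
    rw [MeasureTheory.integral_Icc_eq_integral_Ioc, ← intervalIntegral.integral_of_le (by norm_num)]
    rw [intervalIntegral.integral_sub intervalIntegrable_const
      intervalIntegral.intervalIntegrable_id]
    simp [integral_id]
    norm_num
  have hsub1 : regionBetween (fun _ : ℝ => (0:ℝ)) (fun x => 1 - x) (Set.Icc 0 1) ⊆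
      {p : ℝ × ℝ | 0 ≤ p.1 ∧ 0 ≤ p.2 ∧ p.1 + p.2 ≤ 1} := by
    intro p hp
    obtain ⟨hp1, hp2⟩ := hp
    simp only [Set.mem_Icc, Set.mem_Ioo] at hp1 hp2
    exact ⟨hp1.1, hp2.1.le, by linarith [hp2.2]⟩
  have hsub2 : {p : ℝ × ℝ | 0 ≤ p.1 ∧ 0 ≤ p.2 ∧ p.1 + p.2 ≤ 1} ⊆
      regionBetween (fun _ : ℝ => (0:ℝ)) (fun x => 1 - x) (Set.Icc 0 1) ∪
        {p : ℝ × ℝ | 0 * p.1 + 1 * p.2 = 0} ∪ {p : ℝ × ℝ | 1 * p.1 + 1 * p.2 = 1} := by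
    intro p ⟨h1, h2, h3⟩
    by_cases hy : p.2 = 0
    · exact Or.inl (Or.inr (by simpa using hy))
    by_cases hxy : p.1 + p.2 = 1
    · exact Or.inr (by simpa using hxy)
    refine Or.inl (Or.inl ⟨⟨h1, by linarith⟩, ?_, ?_⟩) <;> simp
    · exact lt_of_le_of_ne h2 (Ne.symm hy)
    · cases' lt_or_eq_of_le h3 with h h
      · linarith
      · exact absurd h hxy
  apply le_antisymm
  · calc volume {p : ℝ × ℝ | 0 ≤ p.1 ∧ 0 ≤ p.2 ∧ p.1 + p.2 ≤ 1}
        ≤ volume (regionBetween (fun _ : ℝ => (0:ℝ)) (fun x => 1 - x) (Set.Icc 0 1) ∪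
            {p : ℝ × ℝ | 0 * p.1 + 1 * p.2 = 0} ∪ {p : ℝ × ℝ | 1 * p.1 + 1 * p.2 = 1}) :=
          measure_mono hsub2
      _ ≤ _ := by
          refine le_trans (measure_union_le _ _) ?_
          rw [line_null (1,1) 1 (by norm_num)]
          refine le_trans (add_le_add_left (measure_union_le _ _) 0) ?_
          rw [line_null (0,1) 0 (by norm_num)]
          simp [hreg]
  · rw [← hreg]; exact measure_mono hsub1

lemma tri_vol (p q r : ℝ × ℝ) :
    volume (convexHull ℝ ({p, q, r} : Set (ℝ × ℝ))) =
      ENNReal.ofReal (|(q.1 - p.1) * (r.2 - p.2) - (q.2 - p.2) * (r.1 - p.1)| / 2) := by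
  set M : Matrix (Fin 2) (Fin 2) ℝ := !![q.1 - p.1, r.1 - p.1; q.2 - p.2, r.2 - p.2] with hM
  set L := Matrix.toLin (Module.Basis.finTwoProd ℝ) (Module.Basis.finTwoProd ℝ) M with hL
  have hdet : LinearMap.det L = (q.1 - p.1) * (r.2 - p.2) - (q.2 - p.2) * (r.1 - p.1) := by
    rw [hL, LinearMap.det_toLin, hM, Matrix.det_fin_two_of]
    ring
  have himg : ({p, q, r} : Set (ℝ × ℝ)) = p +ᵥ (L '' {(0,0), (1,0), (0,1)}) := by
    have h0 : L (0, 0) = (0, 0) := by rw [hL, hM, Matrix.toLin_finTwoProd_apply]; norm_num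
    have h1 : L (1, 0) = (q.1 - p.1, q.2 - p.2) := by
      rw [hL, hM, Matrix.toLin_finTwoProd_apply]; norm_num
    have h2 : L (0, 1) = (r.1 - p.1, r.2 - p.2) := by
      rw [hL, hM, Matrix.toLin_finTwoProd_apply]; norm_num
    rw [Set.image_insert_eq, Set.image_insert_eq, Set.image_singleton, h0, h1, h2]
    rw [Set.vadd_set_insert, Set.vadd_set_insert, Set.vadd_set_singleton]
    ext w
    simp only [Set.mem_insert_iff, Set.mem_singleton_iff, vadd_eq_add, Prod.ext_iff,
      Prod.fst_add, Prod.snd_add]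
    constructor <;> rintro (h | h | h) <;> simp_all <;> constructor <;> linarith
  rw [himg, convexHull_vadd, ← L.image_convexHull]
  rw [measure_vadd, Measure.addHaar_image_linearMap, std_triangle_vol, hdet,
    ← ENNReal.ofReal_mul (abs_nonneg _)]
  ring_nf

lemma hull4_union {A B C D : ℝ × ℝ} {lam mu : ℝ} (hl0 : 0 ≤ lam) (hl1 : lam ≤ 1)
    (hm0 : 0 < mu) (hm1 : mu < 1)
    (hdiag : lam • A + (1 - lam) • C = mu • B + (1 - mu) • D) :
    convexHull ℝ ({A, B, C, D} : Set (ℝ × ℝ)) =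
      convexHull ℝ ({A, B, C} : Set (ℝ × ℝ)) ∪ convexHull ℝ ({A, C, D} : Set (ℝ × ℝ)) := by
  apply Set.Subset.antisymm
  · intro x hx
    obtain ⟨α, β, γ, δ, hα, hβ, hγ, hδ, hsum, hrep⟩ := hull4_rep hx
    have h1 : lam * A.1 + (1 - lam) * C.1 = mu * B.1 + (1 - mu) * D.1 := by
      simpa using congrArg Prod.fst hdiag
    have h2 : lam * A.2 + (1 - lam) * C.2 = mu * B.2 + (1 - mu) * D.2 := by
      simpa using congrArg Prod.snd hdiag
    have hx1 : x.1 = α * A.1 + β * B.1 + γ * C.1 + δ * D.1 := by rw [hrep]; simp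
    have hx2 : x.2 = α * A.2 + β * B.2 + γ * C.2 + δ * D.2 := by rw [hrep]; simp
    have hmu' : (0:ℝ) < 1 - mu := by linarith
    by_cases hcase : δ * mu ≤ β * (1 - mu)
    · left
      have hxeq : x = (α + δ * lam / (1 - mu)) • A + (β - δ * mu / (1 - mu)) • B +
          (γ + δ * (1 - lam) / (1 - mu)) • C := by
        have e1 : x.1 = (α + δ * lam / (1 - mu)) * A.1 + (β - δ * mu / (1 - mu)) * B.1 +
            (γ + δ * (1 - lam) / (1 - mu)) * C.1 := by
          rw [hx1]; field_simp; linear_combination (-δ) * h1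
        have e2 : x.2 = (α + δ * lam / (1 - mu)) * A.2 + (β - δ * mu / (1 - mu)) * B.2 +
            (γ + δ * (1 - lam) / (1 - mu)) * C.2 := by
          rw [hx2]; field_simp; linear_combination (-δ) * h2
        exact Prod.ext (by simpa using e1) (by simpa using e2)
      rw [hxeq]
      refine mem_hull3 _ _ _ (by positivity) ?_ ?_ ?_
      · rw [sub_nonneg, div_le_iff₀ hmu']; linarith
      · have := div_nonneg (mul_nonneg hδ (by linarith : (0:ℝ) ≤ 1 - lam)) hmu'.le
        linarith
      · field_simp; linear_combination (1 - mu) * hsum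
    · right
      push_neg at hcase
      have hxeq : x = (α + β * lam / mu) • A + (γ + β * (1 - lam) / mu) • C +
          (δ - β * (1 - mu) / mu) • D := by
        have e1 : x.1 = (α + β * lam / mu) * A.1 + (γ + β * (1 - lam) / mu) * C.1 +
            (δ - β * (1 - mu) / mu) * D.1 := by
          rw [hx1]; field_simp; linear_combination (-β) * h1
        have e2 : x.2 = (α + β * lam / mu) * A.2 + (γ + β * (1 - lam) / mu) * C.2 +
            (δ - β * (1 - mu) / mu) * D.2 := by
          rw [hx2]; field_simp; linear_combination (-β) * h2
        exact Prod.ext (by simpa using e1) (by simpa using e2)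
      rw [hxeq]
      refine mem_hull3 _ _ _ (by positivity) ?_ ?_ ?_
      · have := div_nonneg (mul_nonneg hβ (by linarith : (0:ℝ) ≤ 1 - lam)) hm0.le
        linarith
      · rw [sub_nonneg, div_le_iff₀ hm0]; nlinarith
      · field_simp; linear_combination mu * hsum
  · apply Set.union_subset <;> apply convexHull_mono <;> intro y hy <;> simp at hy ⊢ <;> tauto

/-- For points p₂ = pt a, p₃ = pt b, p₄ = pt c on the unit circle in clockwise
order (a > b > c) within an open half-circle (a - c < π), the triangle
{p₂, p₄, -p₃} and the quadrilateral {p₂, p₃, p₄, -p₂} have equal area. -/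
theorem stmt_4 (a b c : ℝ) (h1 : c < b) (h2 : b < a) (h3 : a - c < Real.pi) :
    volume (convexHull ℝ ({pt a, pt c, -pt b} : Set (ℝ × ℝ))) =
      volume (convexHull ℝ ({pt a, pt b, pt c, -pt a} : Set (ℝ × ℝ))) := by
  obtain ⟨s1, hs1def⟩ : ∃ x, x = Real.sin (a - b) := ⟨_, rfl⟩
  obtain ⟨s2, hs2def⟩ : ∃ x, x = Real.sin (b - c) := ⟨_, rfl⟩
  obtain ⟨s3, hs3def⟩ : ∃ x, x = Real.sin (a - c) := ⟨_, rfl⟩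
  have hs1 : 0 < s1 := hs1def ▸ Real.sin_pos_of_pos_of_lt_pi (by linarith) (by linarith)
  have hs2 : 0 < s2 := hs2def ▸ Real.sin_pos_of_pos_of_lt_pi (by linarith) (by linarith)
  have hs3 : 0 < s3 := hs3def ▸ Real.sin_pos_of_pos_of_lt_pi (by linarith) (by linarith)
  have hcos1 : Real.cos (b - c) < 1 := by
    have := Real.cos_lt_cos_of_nonneg_of_le_pi (le_refl 0) (by linarith) (by linarith : (0:ℝ) < b - c)
    simpa using this
  have hadd : s3 = s1 * Real.cos (b - c) + Real.cos (a - b) * s2 := by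
    rw [hs1def, hs2def, hs3def, show a - c = (a - b) + (b - c) by ring, Real.sin_add]
  have hsub : s3 < s1 + s2 := by
    nlinarith [Real.cos_le_one (a - b)]
  have hsub2 : s1 ≤ s2 + s3 := by
    have h : s1 = s3 * Real.cos (b - c) - Real.cos (a - c) * s2 := by
      rw [hs1def, hs2def, hs3def, show a - b = (a - c) - (b - c) by ring, Real.sin_sub]
    nlinarith [Real.cos_le_one (b - c), Real.neg_one_le_cos (a - c)]
  set sig : ℝ := s1 + s2 + s3 with hSdef
  have hsig : 0 < sig := by positivity
  set lam : ℝ := (s2 + s3 - s1) / sig with hlamdef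
  set mu : ℝ := 2 * s3 / sig with hmudef
  have hl0 : 0 ≤ lam := div_nonneg (by linarith) hsig.le
  have hl1 : lam ≤ 1 := by rw [div_le_one hsig]; linarith
  have hm0 : 0 < mu := hmudef ▸ by positivity
  have hm1 : mu < 1 := by rw [div_lt_one hsig]; linarith
  have key1 : s2 * Real.cos a + s1 * Real.cos c = s3 * Real.cos b := by
    simp only [hs1def, hs2def, hs3def, Real.sin_sub]; ring
  have key2 : s2 * Real.sin a + s1 * Real.sin c = s3 * Real.sin b := by
    simp only [hs1def, hs2def, hs3def, Real.sin_sub]; ring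
  have hdiag : lam • pt a + (1 - lam) • pt c = mu • pt b + (1 - mu) • (-pt a) := by
    have e1 : lam * Real.cos a + (1 - lam) * Real.cos c =
        mu * Real.cos b + (1 - mu) * (-Real.cos a) := by
      rw [hlamdef, hmudef]; field_simp; linear_combination 2 * key1
    have e2 : lam * Real.sin a + (1 - lam) * Real.sin c =
        mu * Real.sin b + (1 - mu) * (-Real.sin a) := by
      rw [hlamdef, hmudef]; field_simp; linear_combination 2 * key2
    apply Prod.ext <;> simp [pt] <;> [linarith [e1]; linarith [e2]]
  have hunion := hull4_union hl0 hl1 hm0 hm1 hdiag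
  -- intersection is null
  obtain ⟨f, hfdef⟩ : ∃ f : ℝ × ℝ → ℝ, f = fun w =>
    ((pt c).1 - (pt a).1) * (w.2 - (pt a).2) - ((pt c).2 - (pt a).2) * (w.1 - (pt a).1) := ⟨_, rfl⟩
  have hfB : f (pt b) = s1 + s2 - s3 := by
    simp only [hfdef, pt, hs1def, hs2def, hs3def, Real.sin_sub]; ring
  have hfD : f (-pt a) = -2 * s3 := by
    simp only [hfdef, pt, hs3def, Real.sin_sub, Prod.fst_neg, Prod.snd_neg]; ring
  have hT1 : ∀ w ∈ convexHull ℝ ({pt a, pt b, pt c} : Set (ℝ × ℝ)), 0 ≤ f w := by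
    intro w hw
    obtain ⟨c1, c2, c3, hc1, hc2, hc3, hcs, hw⟩ := hull3_rep hw
    have hw1 : w.1 = c1 * (pt a).1 + c2 * (pt b).1 + c3 * (pt c).1 := by rw [hw]; simp
    have hw2 : w.2 = c1 * (pt a).2 + c2 * (pt b).2 + c3 * (pt c).2 := by rw [hw]; simp
    have : f w = c2 * f (pt b) := by
      simp only [hfdef, hw1, hw2]
      linear_combination (((pt c).1 - (pt a).1) * (pt a).2 - ((pt c).2 - (pt a).2) * (pt a).1) * hcs
    rw [this, hfB]
    have : (0:ℝ) ≤ s1 + s2 - s3 := by linarith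
    positivity
  have hT2 : ∀ w ∈ convexHull ℝ ({pt a, pt c, -pt a} : Set (ℝ × ℝ)), f w ≤ 0 := by
    intro w hw
    obtain ⟨c1, c2, c3, hc1, hc2, hc3, hcs, hw⟩ := hull3_rep hw
    have hw1 : w.1 = c1 * (pt a).1 + c2 * (pt c).1 + c3 * (-pt a).1 := by rw [hw]; simp
    have hw2 : w.2 = c1 * (pt a).2 + c2 * (pt c).2 + c3 * (-pt a).2 := by rw [hw]; simp
    have : f w = c3 * f (-pt a) := by
      simp only [hfdef, hw1, hw2, Prod.fst_neg, Prod.snd_neg]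
      linear_combination (((pt c).1 - (pt a).1) * (pt a).2 - ((pt c).2 - (pt a).2) * (pt a).1) * hcs
    rw [this, hfD]
    nlinarith
  have hinter : volume (convexHull ℝ ({pt a, pt b, pt c} : Set (ℝ × ℝ)) ∩
      convexHull ℝ ({pt a, pt c, -pt a} : Set (ℝ × ℝ))) = 0 := by
    obtain ⟨u, hudef⟩ : ∃ u : ℝ × ℝ, u = (-((pt c).2 - (pt a).2), (pt c).1 - (pt a).1) := ⟨_, rfl⟩
    have hu : u ≠ 0 := by
      intro h
      rw [Prod.ext_iff] at h
      simp only [hudef, Prod.fst_neg, Prod.fst_zero, Prod.snd_zero] at h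
      have : f (pt b) = 0 := by
        simp only [hfdef]
        have h1 : (pt c).1 - (pt a).1 = 0 := h.2
        have h2 : (pt c).2 - (pt a).2 = 0 := by linarith [h.1]
        rw [h1, h2]; ring
      rw [hfB] at this; linarith
    refine measure_mono_null ?_ (line_null u
      (-((pt c).2 - (pt a).2) * (pt a).1 + ((pt c).1 - (pt a).1) * (pt a).2) hu)
    · intro w ⟨hw1, hw2⟩
      have h1 := hT1 w hw1
      have h2 := hT2 w hw2
      have : f w = 0 := le_antisymm h2 h1
      simp only [Set.mem_setOf_eq, hudef]
      simp only [hfdef] at this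
      linarith [this]
  -- now compute volumes
  have hQ : volume (convexHull ℝ ({pt a, pt b, pt c, -pt a} : Set (ℝ × ℝ))) =
      volume (convexHull ℝ ({pt a, pt b, pt c} : Set (ℝ × ℝ))) +
      volume (convexHull ℝ ({pt a, pt c, -pt a} : Set (ℝ × ℝ))) := by
    rw [hunion]
    have hmeas : MeasurableSet (convexHull ℝ ({pt a, pt c, -pt a} : Set (ℝ × ℝ))) :=
      ((((Set.finite_singleton _).insert _).insert _).isCompact_convexHull ℝ).isClosed.measurableSet
    have := measure_union_add_inter (μ := volume)
      (convexHull ℝ ({pt a, pt b, pt c} : Set (ℝ × ℝ))) hmeas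
    rw [hinter, add_zero] at this
    exact this
  rw [hQ, tri_vol, tri_vol, tri_vol]
  have d1 : ((pt c).1 - (pt a).1) * ((-pt b).2 - (pt a).2) -
      ((pt c).2 - (pt a).2) * ((-pt b).1 - (pt a).1) = -(s1 + s2 + s3) := by
    simp only [pt, hs1def, hs2def, hs3def, Real.sin_sub, Prod.fst_neg, Prod.snd_neg]; ring
  have d2 : ((pt b).1 - (pt a).1) * ((pt c).2 - (pt a).2) -
      ((pt b).2 - (pt a).2) * ((pt c).1 - (pt a).1) = s3 - s1 - s2 := by
    simp only [pt, hs1def, hs2def, hs3def, Real.sin_sub]; ring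
  have d3 : ((pt c).1 - (pt a).1) * ((-pt a).2 - (pt a).2) -
      ((pt c).2 - (pt a).2) * ((-pt a).1 - (pt a).1) = -(2 * s3) := by
    simp only [pt, hs3def, Real.sin_sub, Prod.fst_neg, Prod.snd_neg]; ring
  rw [d1, d2, d3]
  rw [abs_of_nonpos (by linarith), abs_of_nonpos (by linarith), abs_of_nonpos (by linarith)]
  rw [← ENNReal.ofReal_add (by linarith) (by linarith)]
  congr 1
  ring
end

section
/- For every even n ≥ 6 there exists an antipodal point set S of 2n points on the unit circle, a thick antipodal polygon P on S, and a non-thick antipodal polygon Q on S, such that Area(Q) > Area(P). -/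
open MeasureTheory

/-!
With `d = 1 / (100 n)`, the point set has angles `0, d` near `(1, 0)` and `π/2 + j d` near
`(0, 1)`. `P` takes `pt 0`, `pt d` and alternately `-pt (π/2 + 2kd)`, `pt (π/2 + (2k+1)d)`.
Writing `h t = dotp v (pt (π/2 + t))`, the identity
`cos a * h b - cos b * h a = -(v.1 * sin (b - a))` shows that an open half-plane `0 < dotp v ·`
can miss both points of the `k`-th pair only if `0 < v.1`, and then it misses no other pair;
since `dotp v (pt 0) = v.1`, the vertex `pt 0` makes up for that pair, so `P` is thick.
`Q` takes `pt 0`, `pt (π/2)` and the antipodes of the other points, so the upper half-plane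
contains only one of its vertices. Finally `P` lies in a triangle of area `(51/50)^2`, while `Q`
contains two triangles, on either side of a line, of total area `1 + cos d`.
-/

open Real

section TriangleArea

open scoped Pointwise

lemma volume_graph_eq_zero {f : ℝ → ℝ} (hf : Measurable f) :
    volume {p : ℝ × ℝ | p.2 = f p.1} = 0 := by
  rw [Measure.volume_eq_prod, Measure.measure_prod_null (measurableSet_graph hf)]
  refine Filter.Eventually.of_forall fun x => ?_
  have : Prod.mk x ⁻¹' {p : ℝ × ℝ | p.2 = f p.1} = {f x} := rfl
  simp [this]

lemma volume_setOf_linear_eq_zero {a b : ℝ} (hb : b ≠ 0) (c : ℝ) :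
    volume {p : ℝ × ℝ | a * p.1 + b * p.2 = c} = 0 := by
  convert volume_graph_eq_zero (f := fun x => (c - a * x) / b) (by fun_prop) using 2
  ext p
  rw [Set.mem_ofPred_eq, Set.mem_ofPred_eq, eq_div_iff hb]
  constructor <;> intro h <;> linarith

lemma volume_union_eq_of_subset_halfPlanes {s t : Set (ℝ × ℝ)} {a b c : ℝ} (hb : b ≠ 0)
    (hs : s ⊆ {p | c ≤ a * p.1 + b * p.2}) (ht : t ⊆ {p | a * p.1 + b * p.2 ≤ c})
    (ht' : NullMeasurableSet t) : volume (s ∪ t) = volume s + volume t :=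
  measure_union₀ ht' <| measure_mono_null
    (fun _ hp => le_antisymm (ht hp.2) (hs hp.1)) (volume_setOf_linear_eq_zero hb c)

lemma isLinearMap_mul_fst_add_mul_snd (a b : ℝ) :
    IsLinearMap ℝ fun p : ℝ × ℝ => a * p.1 + b * p.2 :=
  ⟨fun p q => by simp only [Prod.fst_add, Prod.snd_add]; ring,
    fun r p => by simp only [Prod.smul_fst, Prod.smul_snd, smul_eq_mul]; ring⟩

lemma smul_add_smul_add_smul_mem_convexHull {𝕜 E : Type*} [Field 𝕜] [LinearOrder 𝕜]
    [IsStrictOrderedRing 𝕜] [AddCommGroup E] [Module 𝕜 E] (x y z : E) {a b c : 𝕜}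
    (ha : 0 ≤ a) (hb : 0 ≤ b) (hc : 0 ≤ c) (habc : a + b + c = 1) :
    a • x + b • y + c • z ∈ convexHull 𝕜 {x, y, z} := by
  have := (convex_convexHull 𝕜 {x, y, z}).sum_mem (t := Finset.univ) (w := ![a, b, c])
    (z := ![x, y, z]) (by simp [Fin.forall_fin_succ, ha, hb, hc])
    (by simp [Fin.sum_univ_three, habc])
    (fun i _ => subset_convexHull 𝕜 _ (by fin_cases i <;> simp))
  simpa [Fin.sum_univ_three] using this

lemma convexHull_stdTriangle :
    convexHull ℝ {((0 : ℝ), (0 : ℝ)), (1, 0), (0, 1)} =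
      {p : ℝ × ℝ | 0 ≤ p.1 ∧ 0 ≤ p.2 ∧ p.1 + p.2 ≤ 1} := by
  refine subset_antisymm (convexHull_min ?_ ?_) ?_
  · rintro p (rfl | rfl | rfl) <;> norm_num
  · rintro p ⟨hp₁, hp₂, hp₃⟩ q ⟨hq₁, hq₂, hq₃⟩ s t hs ht hst
    simp only [Set.mem_ofPred_eq, Prod.fst_add, Prod.snd_add, Prod.smul_fst, Prod.smul_snd,
      smul_eq_mul]
    exact ⟨by positivity, by positivity, by nlinarith⟩
  · rintro ⟨x, y⟩ ⟨hx, hy, hxy⟩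
    convert smul_add_smul_add_smul_mem_convexHull ((0 : ℝ), (0 : ℝ)) (1, 0) (0, 1)
      (sub_nonneg.2 hxy) hx hy (by ring) using 1
    simp

lemma volume_stdTriangle :
    volume {p : ℝ × ℝ | 0 ≤ p.1 ∧ 0 ≤ p.2 ∧ p.1 + p.2 ≤ 1} = ENNReal.ofReal (1 / 2) := by
  set T := {p : ℝ × ℝ | 0 ≤ p.1 ∧ 0 ≤ p.2 ∧ p.1 + p.2 ≤ 1}
  set R := regionBetween (fun _ => 0) (fun x => 1 - x) (Set.Icc (0 : ℝ) 1)
  have hR : volume R = ENNReal.ofReal (1 / 2) := by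
    rw [Measure.volume_eq_prod, volume_regionBetween_eq_integral
      continuous_const.integrableOn_Icc
      (by fun_prop : Continuous fun x : ℝ => 1 - x).integrableOn_Icc
      measurableSet_Icc (fun x hx => sub_nonneg.2 hx.2),
      integral_Icc_eq_integral_Ioc, ← intervalIntegral.integral_of_le zero_le_one]
    simp only [Pi.sub_apply, sub_zero]
    rw [intervalIntegral.integral_sub intervalIntegrable_const
      intervalIntegral.intervalIntegrable_id]
    norm_num
  have hRT : R ⊆ T := fun p ⟨⟨hx, _⟩, hy₁, hy₂⟩ => ⟨hx, hy₁.le, by simp at hy₂; linarith⟩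
  have hTR : T ⊆ R ∪ ({p | p.2 = 0} ∪ {p | p.2 = 1 - p.1}) := by
    rintro ⟨x, y⟩ ⟨hx, hy, hxy⟩
    rcases hy.eq_or_lt with rfl | hy
    · simp
    rcases hxy.eq_or_lt with hxy | hxy
    · right; right; simp only [Set.mem_ofPred_eq]; linarith
    left; exact ⟨⟨hx, by linarith⟩, by simpa using hy, by simp; linarith⟩
  have hnull : volume ({p : ℝ × ℝ | p.2 = 0} ∪ {p | p.2 = 1 - p.1}) = 0 :=
    measure_union_null (volume_graph_eq_zero (f := fun _ => 0) measurable_const)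
      (volume_graph_eq_zero (f := fun x => 1 - x) (by fun_prop))
  refine le_antisymm ?_ (hR ▸ measure_mono hRT)
  calc volume T ≤ volume R + 0 := hnull ▸ (measure_mono hTR).trans (measure_union_le _ _)
    _ = _ := by rw [add_zero, hR]

lemma volume_convexHull_triple (a b c : ℝ × ℝ) :
    volume (convexHull ℝ {a, b, c}) =
      ENNReal.ofReal (|(b.1 - a.1) * (c.2 - a.2) - (c.1 - a.1) * (b.2 - a.2)| / 2) := by
  let L : ℝ × ℝ →ₗ[ℝ] ℝ × ℝ := Matrix.toLin (Module.Basis.finTwoProd ℝ)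
    (Module.Basis.finTwoProd ℝ) !![b.1 - a.1, c.1 - a.1; b.2 - a.2, c.2 - a.2]
  have hL : ∀ p : ℝ × ℝ, L p = p.1 • (b - a) + p.2 • (c - a) := fun p => by
    simp [L, Matrix.toLin_apply, Matrix.mulVec, dotProduct, Fin.sum_univ_two, Prod.ext_iff]
    constructor <;> ring
  have himage : convexHull ℝ {a, b, c} = a +ᵥ L '' convexHull ℝ {(0, 0), (1, 0), (0, 1)} := by
    rw [L.image_convexHull, ← convexHull_vadd]
    congr 1
    simp only [hL, Set.image_insert_eq, Set.image_singleton, Set.vadd_set_insert,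
      Set.vadd_set_singleton, vadd_eq_add, zero_smul, one_smul, add_zero, zero_add, add_sub_cancel]
  rw [himage, measure_vadd, Measure.addHaar_image_linearMap, convexHull_stdTriangle,
    volume_stdTriangle, LinearMap.det_toLin, Matrix.det_fin_two_of,
    ← ENNReal.ofReal_mul (abs_nonneg _)]
  ring_nf

end TriangleArea

lemma pt_pi_div_two_add (t : ℝ) : pt (π / 2 + t) = (-sin t, cos t) := by
  rw [pt, add_comm, cos_add_pi_div_two, sin_add_pi_div_two]

lemma dotp_neg_left (v w : ℝ × ℝ) : dotp (-v) w = -dotp v w := by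
  simp only [dotp, Prod.fst_neg, Prod.snd_neg]; ring

lemma dotp_neg_right_s11 (v w : ℝ × ℝ) : dotp v (-w) = -dotp v w := by
  simp only [dotp, Prod.fst_neg, Prod.snd_neg]; ring

lemma cos_mul_dotp_sub_cos_mul_dotp (v : ℝ × ℝ) (a b : ℝ) :
    cos a * dotp v (pt (π / 2 + b)) - cos b * dotp v (pt (π / 2 + a)) =
      -(v.1 * sin (b - a)) := by
  simp only [pt_pi_div_two_add, dotp, sin_sub]; ring

lemma fst_nonpos_of_dotp_pt {a b : ℝ} (ha : 0 ≤ a) (hab : a < b) (hb : b ≤ 1) (v : ℝ × ℝ)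
    (h₁ : dotp v (pt (π / 2 + a)) ≤ 0) (h₂ : 0 ≤ dotp v (pt (π / 2 + b))) : v.1 ≤ 0 := by
  have hca : 0 < cos a := cos_pos_of_le_one (abs_le.2 ⟨by linarith, by linarith⟩)
  have hcb : 0 < cos b := cos_pos_of_le_one (abs_le.2 ⟨by linarith, hb⟩)
  have hs : 0 < sin (b - a) := sin_pos_of_pos_of_lt_pi (by linarith) (by linarith [pi_gt_three])
  have := cos_mul_dotp_sub_cos_mul_dotp v a b
  nlinarith [mul_nonneg hca.le h₂, mul_nonneg hcb.le (neg_nonneg.2 h₁)]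

def MissesPair (v : ℝ × ℝ) (a b : ℝ) : Prop :=
  ¬ 0 < dotp v (-pt (π / 2 + a)) ∧ ¬ 0 < dotp v (pt (π / 2 + b))

lemma MissesPair.fst_pos {v : ℝ × ℝ} {a b : ℝ} (hv : v ≠ 0) (ha : 0 ≤ a) (hab : a < b)
    (hb : b ≤ 1) (h : MissesPair v a b) : 0 < v.1 := by
  obtain ⟨h₁, h₂⟩ := h
  rw [dotp_neg_right_s11, neg_pos, not_lt] at h₁
  rw [not_lt] at h₂
  have hv₁ : 0 ≤ v.1 := by
    simpa using fst_nonpos_of_dotp_pt ha hab hb (-v) (by rw [dotp_neg_left]; linarith)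
      (by rw [dotp_neg_left]; linarith)
  refine hv₁.lt_of_ne fun h0 => hv ?_
  have hca : 0 < cos a := cos_pos_of_le_one (abs_le.2 ⟨by linarith, by linarith⟩)
  have hcb : 0 < cos b := cos_pos_of_le_one (abs_le.2 ⟨by linarith, hb⟩)
  simp only [pt_pi_div_two_add, dotp, ← h0, zero_mul, zero_add] at h₁ h₂
  exact Prod.ext h0.symm (le_antisymm (nonpos_of_mul_nonpos_left h₂ hcb)
    (nonneg_of_mul_nonneg_left h₁ hca))

lemma MissesPair.false_of_lt {v : ℝ × ℝ} {a b a' b' : ℝ} (hv : v ≠ 0) (ha : 0 ≤ a)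
    (hab : a < b) (hba' : b < a') (ha'b' : a' < b') (hb' : b' ≤ 1) (h : MissesPair v a b)
    (h' : MissesPair v a' b') : False := by
  have h₁ := not_lt.1 h.2
  have h₂ := not_lt.1 h'.1
  rw [dotp_neg_right_s11, neg_nonpos] at h₂
  exact (h.fst_pos hv ha hab (by linarith)).not_ge
    (fst_nonpos_of_dotp_pt (by linarith) hba' (by linarith) v h₁ h₂)

lemma eq_of_missesPair {v : ℝ × ℝ} {d : ℝ} {k k' : ℕ} (hv : v ≠ 0) (hd : 0 < d)
    (hk : (2 * k + 1) * d ≤ 1) (hk' : (2 * k' + 1) * d ≤ 1)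
    (h : MissesPair v (2 * k * d) ((2 * k + 1) * d))
    (h' : MissesPair v (2 * k' * d) ((2 * k' + 1) * d)) : k = k' := by
  by_contra hne
  wlog hlt : k < k' generalizing k k'
  · exact this hk' hk h' h (Ne.symm hne) (by omega)
  have hkd : (2 * k + 1 : ℝ) * d < 2 * k' * d := by
    gcongr
    exact_mod_cast (by omega : 2 * k + 1 < 2 * k')
  exact h.false_of_lt hv (by positivity) (by linarith) hkd (by linarith) hk' h'

lemma ncard_setOf_fin (n : ℕ) (p : ℕ → Prop) :
    {i : Fin n | p i}.ncard = {j | j < n ∧ p j}.ncard := by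
  rw [← Set.ncard_image_of_injective _ Fin.val_injective]
  congr 1
  ext j
  exact ⟨fun ⟨i, hi, hij⟩ => hij ▸ ⟨i.2, hi⟩, fun ⟨hj, hp⟩ => ⟨⟨j, hj⟩, hp, rfl⟩⟩

noncomputable def angle (d : ℝ) : ℕ → ℝ
  | 0 => 0
  | 1 => d
  | j + 2 => π / 2 + j * d

lemma angle_strictMono {d : ℝ} (hd : 0 < d) (hd' : d < π / 2) : StrictMono (angle d) := by
  refine strictMono_nat_of_lt_succ fun j => ?_
  rcases j with _ | _ | j
  · simpa [angle] using hd
  · simpa [angle] using hd'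
  · simp only [angle]; push_cast; linarith

lemma angle_mem_Ico {d : ℝ} (hd : 0 ≤ d) {j : ℕ} (hj : j * d < π / 2) :
    angle d j ∈ Set.Ico 0 π := by
  rcases j with _ | _ | j
  · simp [angle, pi_pos]
  · simp only [angle]; constructor <;> push_cast at hj <;> linarith [pi_pos]
  · simp only [angle]; push_cast at hj
    constructor <;> nlinarith [pi_pos]

noncomputable def vert (d : ℝ) (s : ℕ → Bool) (j : ℕ) : ℝ × ℝ :=
  if s j then pt (angle d j) else -pt (angle d j)

lemma vtx_eq_vert {n : ℕ} (d : ℝ) (s : ℕ → Bool) (i : Fin n) :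
    vtx (fun i : Fin n => angle d i) (fun i => s i) i = vert d s i := rfl

def selP : ℕ → Bool
  | 0 => true
  | 1 => true
  | j + 2 => j % 2 == 1

def selQ (j : ℕ) : Bool := j == 0 || j == 2

lemma vert_selP_zero (d : ℝ) : vert d selP 0 = pt 0 := rfl

lemma vert_selP_even (d : ℝ) (k : ℕ) : vert d selP (2 * k + 2) = -pt (π / 2 + 2 * k * d) := by
  simp [vert, selP, angle]

lemma vert_selP_odd (d : ℝ) (k : ℕ) :
    vert d selP (2 * k + 3) = pt (π / 2 + (2 * k + 1) * d) := by
  simp [vert, selP, angle, Nat.add_mod]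

theorem thick_selP {n : ℕ} {d : ℝ} (hd : 0 < d) (hnd : n * d ≤ 1) (hn : Even n) :
    Thick (fun i : Fin n => angle d i) (fun i => selP i) := by
  intro v hv
  obtain ⟨m, rfl⟩ := hn
  simp only [vtx_eq_vert]
  rw [ncard_setOf_fin (m + m) fun j => 0 < dotp v (vert d selP j),
    show (m + m - 1) / 2 = m - 1 by omega]
  have hoff : ∀ j < m + m, (j : ℝ) * d ≤ 1 := fun j hj =>
    (mul_le_mul_of_nonneg_right (by exact_mod_cast hj.le) hd.le).trans hnd
  have misses : ∀ k, ¬ 0 < dotp v (vert d selP (2 * k + 2)) →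
      ¬ 0 < dotp v (vert d selP (2 * k + 3)) → MissesPair v (2 * k * d) ((2 * k + 1) * d) :=
    fun k h₂ h₃ => ⟨by rwa [← vert_selP_even], by rwa [← vert_selP_odd]⟩
  let pick (k : ℕ) : ℕ :=
    if 0 < dotp v (vert d selP (2 * k + 3)) then 2 * k + 3
    else if 0 < dotp v (vert d selP (2 * k + 2)) then 2 * k + 2 else 0
  have hpick : ∀ k, pick k / 2 = k + 1 ∨
      pick k = 0 ∧ MissesPair v (2 * k * d) ((2 * k + 1) * d) := by
    intro k
    simp only [pick]
    split_ifs with h₃ h₂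
    · left; omega
    · left; omega
    · exact Or.inr ⟨rfl, misses k h₂ h₃⟩
  refine Set.le_ncard_of_inj_on_range pick ?_ ?_
    ((Set.finite_Iio (m + m)).subset fun j hj => hj.1)
  · intro k hk
    simp only [pick]
    split_ifs with h₃ h₂
    · exact ⟨by omega, h₃⟩
    · exact ⟨by omega, h₂⟩
    · have := (misses k h₂ h₃).fst_pos hv (by positivity) (by linarith)
        (by exact_mod_cast hoff (2 * k + 1) (by omega))
      exact ⟨by omega, by simpa [vert_selP_zero, dotp, pt] using this⟩
  · intro k hk k' hk' hkk'
    rcases hpick k with h | ⟨h0, h⟩ <;> rcases hpick k' with h' | ⟨h0', h'⟩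
    · omega
    · omega
    · omega
    exact eq_of_missesPair hv hd (by exact_mod_cast hoff (2 * k + 1) (by omega))
      (by exact_mod_cast hoff (2 * k' + 1) (by omega)) h h'

theorem not_thick_selQ {n : ℕ} {d : ℝ} (hd : 0 < d) (hnd : n * d ≤ 1) (hn : 5 ≤ n) :
    ¬ Thick (fun i : Fin n => angle d i) (fun i => selQ i) := by
  intro h
  have h₂ := h (0, 1) (by simp)
  simp only [vtx_eq_vert] at h₂
  rw [ncard_setOf_fin n fun j => 0 < dotp (0, 1) (vert d selQ j)] at h₂
  have hsub : {j | j < n ∧ 0 < dotp (0, 1) (vert d selQ j)} ⊆ {2} := by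
    rintro j ⟨hj, hpos⟩
    have hjd : j * d ≤ 1 :=
      (mul_le_mul_of_nonneg_right (by exact_mod_cast hj.le) hd.le).trans hnd
    rcases j with _ | _ | _ | j
    · simp [vert, selQ, angle, dotp, pt] at hpos
    · simp [vert, selQ, angle, dotp, pt] at hpos
      push_cast at hjd
      exact absurd hpos (sin_nonneg_of_nonneg_of_le_pi hd.le (by linarith [pi_gt_three])).not_gt
    · rfl
    · simp [vert, selQ, angle, dotp, pt_pi_div_two_add] at hpos
      push_cast at hjd
      exact absurd hpos (cos_pos_of_le_one (abs_le.2 ⟨by nlinarith, by nlinarith⟩)).not_gt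
  have := Set.ncard_le_ncard hsub
  rw [Set.ncard_singleton] at this
  omega

def enclosingTriangle : Set (ℝ × ℝ) :=
  convexHull ℝ {(-(1 / 100), 51 / 50), (-(1 / 100), -(51 / 50)), (101 / 100, 0)}

lemma volume_enclosingTriangle :
    volume enclosingTriangle = ENNReal.ofReal ((51 / 50) ^ 2) := by
  rw [enclosingTriangle, volume_convexHull_triple]
  norm_num [abs_of_pos]

lemma mem_enclosingTriangle {p : ℝ × ℝ} (h₁ : -(1 / 100) ≤ p.1) (h₂ : p.1 + p.2 ≤ 101 / 100)
    (h₃ : p.1 - p.2 ≤ 101 / 100) : p ∈ enclosingTriangle := by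
  rw [enclosingTriangle]
  convert smul_add_smul_add_smul_mem_convexHull ((-(1 / 100) : ℝ), (51 / 50 : ℝ))
    ((-(1 / 100) : ℝ), (-(51 / 50) : ℝ)) ((101 / 100 : ℝ), (0 : ℝ))
    (a := (101 / 100 - p.1 + p.2) / (51 / 25)) (b := (101 / 100 - p.1 - p.2) / (51 / 25))
    (c := (p.1 + 1 / 100) / (51 / 50)) (by linarith) (by linarith) (by linarith) (by ring) using 1
  ext <;> simp only [Prod.smul_mk, smul_eq_mul, Prod.mk_add_mk] <;> ring

lemma vert_selP_mem_enclosingTriangle {d : ℝ} (hd : 0 ≤ d) {j : ℕ} (hj : j * d ≤ 1 / 100) :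
    vert d selP j ∈ enclosingTriangle := by
  have trig : ∀ t : ℝ, 0 ≤ t → t ≤ 1 / 100 →
      0 ≤ sin t ∧ sin t ≤ 1 / 100 ∧ 0 ≤ cos t ∧ cos t ≤ 1 :=
    fun t h0 h1 => ⟨sin_nonneg_of_nonneg_of_le_pi h0 (by linarith [pi_gt_three]),
      (sin_le h0).trans h1, (cos_pos_of_le_one (abs_le.2 ⟨by linarith, by linarith⟩)).le,
      cos_le_one t⟩
  rcases j with _ | _ | j
  · exact mem_enclosingTriangle (by norm_num [vert, selP, angle, pt])
      (by norm_num [vert, selP, angle, pt]) (by norm_num [vert, selP, angle, pt])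
  · norm_num at hj
    obtain ⟨hs₀, hs₁, hc₀, hc₁⟩ := trig d hd hj
    simp only [vert, selP, angle, if_true, pt]
    exact mem_enclosingTriangle (by simp; linarith) (by simp; linarith) (by simp; linarith)
  · have hjd : j * d ≤ 1 / 100 := le_trans (by gcongr; linarith) hj
    obtain ⟨hs₀, hs₁, hc₀, hc₁⟩ := trig (j * d) (by positivity) hjd
    simp only [vert, angle, pt_pi_div_two_add]
    split_ifs <;>
      exact mem_enclosingTriangle (by simp; linarith) (by simp; linarith) (by simp; linarith)

theorem volume_apoly_selP_le {n : ℕ} {d : ℝ} (hd : 0 ≤ d) (hnd : n * d ≤ 1 / 100) :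
    volume (apoly (fun i : Fin n => angle d i) (fun i => selP i)) ≤
      ENNReal.ofReal ((51 / 50) ^ 2) := by
  refine (measure_mono (convexHull_min ?_ (convex_convexHull ℝ _))).trans_eq
    volume_enclosingTriangle
  rintro _ ⟨i, rfl⟩
  exact vert_selP_mem_enclosingTriangle hd
    ((mul_le_mul_of_nonneg_right (by exact_mod_cast i.2.le) hd).trans hnd)

lemma volume_convexHull_union_eq_one_add_cos {d : ℝ} (hd : 0 < d) (hd₁ : d ≤ 1) :
    volume (convexHull ℝ {(1, 0), (0, 1), (sin d, -cos d)} ∪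
      convexHull ℝ {(0, 1), (-cos d, -sin d), (sin d, -cos d)}) = ENNReal.ofReal (1 + cos d) := by
  have hs : 0 < sin d := sin_pos_of_pos_of_lt_pi hd (by linarith [pi_gt_three])
  have hs₁ : sin d ≤ 1 := sin_le_one d
  have hc : 0 < cos d := cos_pos_of_le_one (abs_le.2 ⟨by linarith, hd₁⟩)
  have hsc := sin_sq_add_cos_sq d
  rw [volume_union_eq_of_subset_halfPlanes (a := 1 + cos d) (b := sin d) (c := sin d) hs.ne'
      (convexHull_min ?_ (convex_halfSpace_ge (isLinearMap_mul_fst_add_mul_snd _ _) _))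
      (convexHull_min ?_ (convex_halfSpace_le (isLinearMap_mul_fst_add_mul_snd _ _) _))
      ((convex_convexHull ℝ _).nullMeasurableSet volume),
    volume_convexHull_triple, volume_convexHull_triple, ← ENNReal.ofReal_add (by positivity)
      (by positivity)]
  · congr 1
    simp only
    rw [abs_of_nonneg (by nlinarith), abs_of_nonneg (by nlinarith)]
    nlinarith
  all_goals rintro p (rfl | rfl | rfl) <;> simp <;> nlinarith

theorem one_add_cos_le_volume_apoly_selQ {n : ℕ} {d : ℝ} (hd : 0 < d) (hd₁ : d ≤ 1)
    (hn : 4 ≤ n) :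
    ENNReal.ofReal (1 + cos d) ≤
      volume (apoly (fun i : Fin n => angle d i) (fun i => selQ i)) := by
  set Q := apoly (fun i : Fin n => angle d i) (fun i => selQ i)
  have hQ : Convex ℝ Q := convex_convexHull ℝ _
  have hmem : ∀ j < n, vert d selQ j ∈ Q := fun j hj => subset_convexHull ℝ _ ⟨⟨j, hj⟩, rfl⟩
  have hA : ((1 : ℝ), (0 : ℝ)) ∈ Q := by simpa [vert, selQ, angle, pt] using hmem 0 (by omega)
  have hB : ((0 : ℝ), (1 : ℝ)) ∈ Q := by simpa [vert, selQ, angle, pt] using hmem 2 (by omega)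
  have hC : (-cos d, -sin d) ∈ Q := by simpa [vert, selQ, angle, pt] using hmem 1 (by omega)
  have hD : (sin d, -cos d) ∈ Q := by
    simpa [vert, selQ, angle, pt_pi_div_two_add] using hmem 3 (by omega)
  rw [← volume_convexHull_union_eq_one_add_cos hd hd₁]
  refine measure_mono (Set.union_subset (convexHull_min ?_ hQ) (convexHull_min ?_ hQ)) <;>
    rintro p (rfl | rfl | rfl) <;> assumption

/-- For every even n ≥ 6 there is an antipodal point set with a thick antipodal
polygon of strictly smaller area than some non-thick antipodal polygon. -/
theorem stmt_11 (n : ℕ) (hn : 6 ≤ n) (he : Even n) :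
    ∃ θ : Fin n → ℝ, StrictMono θ ∧ (∀ i, θ i ∈ Set.Ico 0 Real.pi) ∧
      ∃ ε ε' : Fin n → Bool, Thick θ ε ∧ ¬ Thick θ ε' ∧
        volume (apoly θ ε) < volume (apoly θ ε') := by
  set d : ℝ := 1 / (100 * n)
  have hd : 0 < d := by positivity
  have hnd : n * d = 1 / 100 := by
    have : (n : ℝ) ≠ 0 := by exact_mod_cast (by omega : n ≠ 0)
    simp only [d]; field_simp
  have hd₁ : d ≤ 1 / 100 := by
    rw [← hnd]; exact le_mul_of_one_le_left hd.le (by exact_mod_cast (by omega : 1 ≤ n))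
  have hid : ∀ i : Fin n, (i : ℕ) * d < π / 2 := fun i => by
    have : (i : ℕ) * d ≤ n * d := by gcongr; exact_mod_cast i.2.le
    linarith [pi_gt_three]
  refine ⟨fun i => angle d i, (angle_strictMono hd (by linarith [pi_gt_three])).comp
      Fin.val_strictMono, fun i => angle_mem_Ico hd.le (hid i), fun i => selP i,
    fun i => selQ i, thick_selP hd (by linarith) he, not_thick_selQ hd (by linarith) (by omega), ?_⟩
  calc volume (apoly _ _) ≤ ENNReal.ofReal ((51 / 50) ^ 2) := volume_apoly_selP_le hd.le hnd.le
    _ < ENNReal.ofReal (1 + cos d) := by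
      have hcos : 1 - d ^ 2 / 2 ≤ cos d := one_sub_sq_div_two_le_cos
      rw [ENNReal.ofReal_lt_ofReal_iff (by nlinarith)]
      nlinarith
    _ ≤ volume (apoly _ _) := one_add_cos_le_volume_apoly_selQ hd (by linarith) (by omega)
end

section
/- For every d ≥ 2 and every n ≥ d, there exists an antipodal point set S of 2n points on the unit sphere S^{d-1} ⊂ ℝ^d that admits a thick antipodal polytope, i.e., a choice X of one point from each antipodal pair such that every open half-space bounded by a hyperplane through the origin contains at least ⌈(n−d)/2⌉ points of X. -/
/-!
Take the moment curve points `c i = (1, i, …, i ^ (d - 1))`, `i < n`, normalized and with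
alternating signs `(-1) ^ i`. For `v ≠ 0`, the inner product of the `i`-th point with `v` has the
sign of `(-1) ^ i * p i`, where `p ≠ 0` is the polynomial of degree `< d` with coefficient vector
`v`. Among the indices where `(-1) ^ i * p i ≤ 0`, consecutive ones of equal parity are at least two
apart, so if there are more than `(n + d) / 2` of them, `d + 1` of them have alternating parities.
Then `p` weakly alternates in sign at `d + 1` points, which forces `d` roots, a contradiction.
-/

open scoped RealInnerProductSpace
open Polynomial

theorem Polynomial.le_natDegree_of_alternating {p : ℝ[X]} (hp : p ≠ 0) {m : ℕ} {x : ℕ → ℝ}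
    (hx : StrictMonoOn x (Set.Iic m)) (hsign : ∀ j ≤ m, (-1) ^ j * p.eval (x j) ≤ 0) :
    m ≤ p.natDegree := by
  induction m generalizing p x with
  | zero => exact Nat.zero_le _
  | succ m ih =>
    have hx01 : x 0 < x 1 := hx (by simp) (by simp) zero_lt_one
    have hp0 : p.eval (x 0) ≤ 0 := by simpa using hsign 0 (by omega)
    have hp1 : 0 ≤ p.eval (x 1) := by simpa using hsign 1 (by omega)
    obtain ⟨z, hz, hpz⟩ := intermediate_value_Icc hx01.le p.continuous.continuousOn ⟨hp0, hp1⟩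
    obtain ⟨q, rfl⟩ := dvd_iff_isRoot.mpr hpz
    have hq : q ≠ 0 := right_ne_zero_of_mul hp
    have heval (t : ℝ) : ((X - C z) * q).eval t = (t - z) * q.eval t := by simp
    -- `-q` alternates at `y₀, x 2, …, x (m + 1)`; `y₀` is `x 0` unless `z = x 0`, then `x 1`
    obtain ⟨y₀, hy₀, hqy₀⟩ : ∃ y₀ ≤ x 1, 0 ≤ q.eval y₀ := by
      rcases hz.1.eq_or_lt with rfl | hz0
      · exact ⟨x 1, le_rfl, nonneg_of_mul_nonneg_right (heval _ ▸ hp1) (by linarith)⟩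
      · exact ⟨x 0, hx01.le, nonneg_of_mul_nonpos_right (heval _ ▸ hp0) (by linarith)⟩
    have hdeg : ((X - C z) * q).natDegree = q.natDegree + 1 := by
      rw [natDegree_mul (X_sub_C_ne_zero z) hq, natDegree_X_sub_C, add_comm]
    suffices m ≤ (-q).natDegree by rw [natDegree_neg] at this; omega
    refine ih (neg_ne_zero.mpr hq) (x := fun j => if j = 0 then y₀ else x (j + 1)) ?_ ?_
    · intro a ha b hb hab
      simp only [Set.mem_Iic] at ha hb
      simp only [show b ≠ 0 by omega, if_false]
      split_ifs
      · exact hy₀.trans_lt (hx (by simp) (by simp; omega) (by omega))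
      · exact hx (by simp; omega) (by simp; omega) (by omega)
    · intro j hj
      rcases Nat.eq_zero_or_pos j with rfl | hj0
      · simpa using hqy₀
      · have hzx : z < x (j + 1) := hz.2.trans_lt (hx (by simp) (by simp; omega) (by omega))
        have := hsign (j + 1) (by omega)
        rw [heval, pow_succ, mul_left_comm, mul_assoc] at this
        simp only [hj0.ne', if_false, eval_neg]
        linarith [nonpos_of_mul_nonpos_right this (sub_pos.mpr hzx)]

theorem Finset.exists_parity_alternating_chain (s : Finset ℕ) (hs : s.Nonempty) :
    ∃ (m : ℕ) (g : ℕ → ℕ), StrictMonoOn g (Set.Iic m) ∧ (∀ j ≤ m, g j ∈ s) ∧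
      (∀ j ≤ m, (g j + j) % 2 = (g m + m) % 2) ∧ 2 * s.card ≤ g m + m + 2 := by
  induction s using Finset.induction_on_max with
  | empty => exact absurd hs Finset.not_nonempty_empty
  | insert a s hlt ih =>
    rw [Finset.card_insert_of_notMem fun h => lt_irrefl a (hlt a h)]
    rcases s.eq_empty_or_nonempty with rfl | hs
    · exact ⟨0, fun _ => a, fun i hi j hj hij => by simp_all, by simp, by simp, by simp⟩
    obtain ⟨m, g, hmono, hmem, hpar, hcard⟩ := ih hs
    have hga : ∀ j ≤ m, g j < a := fun j hj => hlt _ (hmem j hj)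
    have hgma := hga m le_rfl
    -- `a` is appended to the chain (`k = m + 1`) or replaces its top (`k = m`)
    obtain ⟨k, hmk, hkm, hak⟩ : ∃ k, m ≤ k ∧ k ≤ m + 1 ∧ (a + k) % 2 = (g m + m) % 2 :=
      ⟨m + (a + g m) % 2, by omega, by omega, by omega⟩
    refine ⟨k, fun j => if j < k then g j else a, ?_, ?_, ?_, ?_⟩
    · intro i hi j hj hij
      simp only [Set.mem_Iic] at hi hj
      dsimp only
      split_ifs
      · exact hmono (by simp; omega) (by simp; omega) hij
      · exact hga i (by omega)
      · omega
      · omega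
    · intro j hj
      dsimp only
      split_ifs
      · exact Finset.mem_insert_of_mem (hmem j (by omega))
      · exact Finset.mem_insert_self a s
    · intro j hj
      simp only [lt_irrefl, if_false]
      split_ifs
      · have := hpar j (by omega); omega
      · omega
    · simp only [lt_irrefl, if_false]
      omega

theorem Polynomial.le_two_mul_card_filter_neg_one_pow_mul_eval_pos {p : ℝ[X]} (hp : p ≠ 0)
    (n : ℕ) :
    n ≤ 2 * ((Finset.range n).filter fun i : ℕ => 0 < (-1) ^ i * p.eval (i : ℝ)).card +
      p.natDegree + 1 := by
  have hsplit := Finset.card_filter_add_card_filter_not (s := Finset.range n)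
    fun i : ℕ => 0 < (-1) ^ i * p.eval (i : ℝ)
  simp only [not_lt, Finset.card_range] at hsplit
  set s := (Finset.range n).filter fun i : ℕ => (-1) ^ i * p.eval (i : ℝ) ≤ 0
  rcases s.eq_empty_or_nonempty with hs | hs
  · rw [hs, Finset.card_empty] at hsplit
    omega
  obtain ⟨m, g, hmono, hmem, hpar, hcard⟩ := s.exists_parity_alternating_chain hs
  have hgn : g m < n := Finset.mem_range.mp (Finset.mem_filter.mp (hmem m le_rfl)).1
  have hm : m ≤ (C ((-1) ^ (g m + m)) * p).natDegree := by
    refine le_natDegree_of_alternating (mul_ne_zero (by simp) hp)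
      (Nat.strictMono_cast.comp_strictMonoOn hmono) fun j hj => ?_
    have hsign : (-1 : ℝ) ^ (g m + m) = (-1) ^ (g j) * (-1) ^ j := by
      rw [← pow_add, neg_one_pow_eq_pow_mod_two, ← hpar j hj, ← neg_one_pow_eq_pow_mod_two]
    calc (-1) ^ j * (C ((-1) ^ (g m + m)) * p).eval (g j : ℝ)
        = ((-1) ^ j) ^ 2 * ((-1) ^ (g j) * p.eval (g j : ℝ)) := by
          rw [eval_mul, eval_C, hsign]; ring
      _ ≤ 0 := mul_nonpos_of_nonneg_of_nonpos (sq_nonneg _) (Finset.mem_filter.mp (hmem j hj)).2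
  rw [natDegree_C_mul (by simp)] at hm
  omega

noncomputable def momentCurve (d : ℕ) (t : ℝ) : EuclideanSpace ℝ (Fin d) :=
  WithLp.toLp 2 fun j => t ^ (j : ℕ)

namespace momentCurve

variable {d : ℕ}

@[simp]
theorem apply (t : ℝ) (j : Fin d) : momentCurve d t j = t ^ (j : ℕ) := rfl

theorem ne_zero (hd : 0 < d) (t : ℝ) : momentCurve d t ≠ 0 := fun h => by
  simpa using congr_arg (· ⟨0, hd⟩) h

theorem inner_eq_eval_ofFn (t : ℝ) (v : EuclideanSpace ℝ (Fin d)) :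
    ⟪momentCurve d t, v⟫ = (ofFn d v.ofLp).eval t := by
  simp [ofFn_eq_sum_monomial, eval_finsetSum, PiLp.inner_apply, mul_comm]

theorem eq_and_eq_of_smul_eq_smul (hd : 2 ≤ d) {a b s t : ℝ} (ha : a ≠ 0)
    (h : a • momentCurve d s = b • momentCurve d t) : a = b ∧ s = t := by
  have h0 := congr_arg (· ⟨0, by omega⟩) h
  have h1 := congr_arg (· ⟨1, by omega⟩) h
  simp only [PiLp.smul_apply, apply, pow_zero, pow_one, smul_eq_mul, mul_one] at h0 h1
  subst h0
  exact ⟨rfl, mul_left_cancel₀ ha h1⟩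

end momentCurve

noncomputable def alternatingMomentPoint (d i : ℕ) : EuclideanSpace ℝ (Fin d) :=
  ((-1) ^ i * ‖momentCurve d i‖⁻¹) • momentCurve d i

namespace alternatingMomentPoint

variable {d : ℕ}

theorem coeff_ne_zero (hd : 0 < d) (i : ℕ) : (-1) ^ i * ‖momentCurve d i‖⁻¹ ≠ 0 :=
  mul_ne_zero (by simp) (inv_ne_zero (norm_ne_zero_iff.mpr (momentCurve.ne_zero hd _)))

theorem norm_eq_one (hd : 0 < d) (i : ℕ) : ‖alternatingMomentPoint d i‖ = 1 := by
  rw [alternatingMomentPoint, norm_smul, norm_mul, norm_pow, norm_neg, norm_one, one_pow, one_mul,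
    norm_inv, norm_norm, inv_mul_cancel₀ (norm_ne_zero_iff.mpr (momentCurve.ne_zero hd _))]

theorem injective (hd : 2 ≤ d) : Function.Injective (alternatingMomentPoint d) := fun i _ h =>
  Nat.cast_injective (momentCurve.eq_and_eq_of_smul_eq_smul hd (coeff_ne_zero (by omega) i) h).2

theorem neg_ne (hd : 2 ≤ d) (i j : ℕ) :
    -alternatingMomentPoint d i ≠ alternatingMomentPoint d j := by
  intro h
  rw [alternatingMomentPoint, alternatingMomentPoint, ← neg_smul] at h
  obtain ⟨hcoeff, hij⟩ :=
    momentCurve.eq_and_eq_of_smul_eq_smul hd (neg_ne_zero.mpr (coeff_ne_zero (by omega) i)) h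
  obtain rfl : i = j := Nat.cast_injective hij
  exact coeff_ne_zero (d := d) (by omega) i (by linarith)

theorem inner_pos_iff (hd : 0 < d) (i : ℕ) (v : EuclideanSpace ℝ (Fin d)) :
    0 < ⟪alternatingMomentPoint d i, v⟫ ↔ 0 < (-1) ^ i * (ofFn d v.ofLp).eval (i : ℝ) := by
  rw [alternatingMomentPoint, real_inner_smul_left, momentCurve.inner_eq_eval_ofFn,
    mul_comm _ (‖_‖⁻¹), mul_assoc]
  exact mul_pos_iff_of_pos_left (inv_pos.mpr (norm_pos_iff.mpr (momentCurve.ne_zero hd _)))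

theorem le_two_mul_ncard_inner_pos (hd : 2 ≤ d) (n : ℕ) {v : EuclideanSpace ℝ (Fin d)}
    (hv : v ≠ 0) :
    n ≤ 2 * Set.ncard {x | x ∈ (Finset.range n).image (alternatingMomentPoint d) ∧ 0 < ⟪x, v⟫} +
      d := by
  set p := ofFn d v.ofLp
  have hp : p ≠ 0 := fun h => hv (WithLp.ofLp_injective 2 (injective_ofFn d (by simpa [p] using h)))
  have hdeg : p.natDegree < d := ofFn_natDegree_lt (by omega) _
  have hset : {x | x ∈ (Finset.range n).image (alternatingMomentPoint d) ∧ 0 < ⟪x, v⟫} =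
      ↑(((Finset.range n).filter fun i : ℕ => 0 < (-1) ^ i * p.eval (i : ℝ)).image
        (alternatingMomentPoint d)) := by
    ext x
    simp only [p, ← inner_pos_iff (by omega : 0 < d), Finset.coe_image, Finset.coe_filter,
      Finset.mem_image, Set.mem_ofPred_eq, Set.mem_image]
    grind
  rw [hset, Set.ncard_coe_finset, Finset.card_image_of_injective _ (injective hd)]
  have := le_two_mul_card_filter_neg_one_pow_mul_eval_pos hp n
  omega

end alternatingMomentPoint

theorem stmt_14_general (d n : ℕ) (hd : 2 ≤ d) :
    ∃ X : Finset (EuclideanSpace ℝ (Fin d)),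
      X.card = n ∧ (∀ x ∈ X, ‖x‖ = 1) ∧ (∀ x ∈ X, -x ∉ X) ∧
      ∀ v : EuclideanSpace ℝ (Fin d), v ≠ 0 →
        (n - d + 1) / 2 ≤
          Set.ncard {x : EuclideanSpace ℝ (Fin d) | x ∈ X ∧ 0 < ⟪x, v⟫} := by
  refine ⟨(Finset.range n).image (alternatingMomentPoint d), ?_, ?_, ?_, ?_⟩
  · rw [Finset.card_image_of_injective _ (alternatingMomentPoint.injective hd), Finset.card_range]
  · simp only [Finset.mem_image]
    rintro _ ⟨i, -, rfl⟩
    exact alternatingMomentPoint.norm_eq_one (by omega) i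
  · simp only [Finset.mem_image]
    rintro _ ⟨i, -, rfl⟩ ⟨j, -, hj⟩
    exact alternatingMomentPoint.neg_ne hd i j hj.symm
  · intro v hv
    have := alternatingMomentPoint.le_two_mul_ncard_inner_pos hd n hv
    omega

/-- For every d ≥ 2 and n ≥ d there is an antipodal point set of 2n points on
the unit sphere in ℝ^d admitting a thick antipodal polytope: a choice X of one
point from each antipodal pair (so S = X ∪ (-X) with no antipodal pair inside X)
such that every open half-space bounded by a hyperplane through the origin
contains at least ⌈(n−d)/2⌉ points of X. -/
theorem stmt_14 (d n : ℕ) (hd : 2 ≤ d) (hn : d ≤ n) :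
    ∃ X : Finset (EuclideanSpace ℝ (Fin d)),
      X.card = n ∧ (∀ x ∈ X, ‖x‖ = 1) ∧ (∀ x ∈ X, -x ∉ X) ∧
      ∀ v : EuclideanSpace ℝ (Fin d), v ≠ 0 →
        (n - d + 1) / 2 ≤
          Set.ncard {x : EuclideanSpace ℝ (Fin d) | x ∈ X ∧ 0 < ⟪x, v⟫} :=
  stmt_14_general d n hd
end

section
/- Let S be an antipodal point set of 2n points on the unit circle, n odd. An antipodal polygon P on S is thick if and only if the vertices of P alternate with the non-vertices in the circular order of S, i.e., no two points of S adjacent in circular order are both vertices of P. -/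
open MeasureTheory

/-!
List the `2n` points in circular order. An open half-plane through the origin contains exactly
the points whose angles lie in an open arc of length `π`, that is a run of `n - 1` or `n`
cyclically consecutive points, and every run of `n` consecutive points arises in this way. So
thickness is a statement about the number of chosen points in such runs. Since point `j + n` is
chosen iff point `j` is not, "no two adjacent points chosen" means that chosen points alternate,
and then every run of `n - 1` points contains `(n - 1) / 2` of them. If two adjacent points `j`,
`j + 1` are chosen, the counts `w m` of chosen points among `m, …, m + n - 1` satisfy
`w (j + 2) = w j - 2` and `w j + w (j + n) = n`, so some run of `n` points contains fewer than
`(n - 1) / 2`.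
-/

open Real Finset Function

lemma dotp_pt_pt (β γ : ℝ) : dotp (pt β) (pt γ) = cos (γ - β) := by
  rw [dotp, pt, pt, cos_sub]; ring

lemma dotp_smul_left (r : ℝ) (v w : ℝ × ℝ) : dotp (r • v) w = r * dotp v w := by
  simp only [dotp, Prod.smul_fst, Prod.smul_snd, smul_eq_mul]; ring

lemma pt_ne_zero (x : ℝ) : pt x ≠ 0 := fun h => by
  have h' := congrArg (fun p : ℝ × ℝ => p.1 ^ 2 + p.2 ^ 2) h
  simp only [pt, Prod.fst_zero, Prod.snd_zero, cos_sq_add_sin_sq] at h'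
  norm_num at h'

lemma pt_add_pi (x : ℝ) : pt (x + π) = -pt x := by
  simp [pt, cos_add_pi, sin_add_pi]

lemma pt_add_int_mul_two_pi (x : ℝ) (k : ℤ) : pt (x + k * (2 * π)) = pt x := by
  simp [pt, cos_add_int_mul_two_pi, sin_add_int_mul_two_pi]

lemma exists_pos_smul_pt {v : ℝ × ℝ} (hv : v ≠ 0) : ∃ r : ℝ, 0 < r ∧ ∃ β, v = r • pt β := by
  set z : ℂ := ⟨v.1, v.2⟩
  have hz : z ≠ 0 := fun h => hv (Prod.ext (congrArg Complex.re h) (congrArg Complex.im h))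
  refine ⟨‖z‖, norm_pos_iff.mpr hz, z.arg, Prod.ext ?_ ?_⟩
  · exact (Complex.norm_mul_cos_arg z).symm
  · exact (Complex.norm_mul_sin_arg z).symm

section BoolSequence

variable {f : ℕ → Bool} {n : ℕ}

def windowCount (f : ℕ → Bool) (M L : ℕ) : ℕ := #{l ∈ range L | f (M + l)}

lemma windowCount_two_mul_of_alternating (halt : ∀ j, f (j + 1) = !f j) (M m : ℕ) :
    windowCount f M (2 * m) = m := by
  induction m with
  | zero => rfl
  | succ m ih =>
    have hpair : f (M + 2 * m + 1) = !f (M + 2 * m) := halt _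
    simp only [windowCount, card_filter] at ih ⊢
    rw [show 2 * (m + 1) = 2 * m + 1 + 1 by ring, sum_range_succ, sum_range_succ, ih,
      ← add_assoc M, hpair]
    cases f (M + 2 * m) <;> simp

lemma succ_eq_not_of_antiperiodic (hf : ∀ j, f (j + n) = !f j)
    (hadj : ∀ j, ¬(f j = true ∧ f (j + 1) = true)) (j : ℕ) : f (j + 1) = !f j := by
  cases hj : f j
  · have hjn : f (j + n) = true := by rw [hf, hj]; rfl
    have hjn' : f (j + 1 + n) = false := by
      rw [show j + 1 + n = j + n + 1 by ring]
      simpa [hjn] using hadj (j + n)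
    simpa [hf] using hjn'
  · simpa [hj] using hadj j

lemma windowCount_add_windowCount_add_self (hf : ∀ j, f (j + n) = !f j) (M : ℕ) :
    windowCount f M n + windowCount f (M + n) n = n := by
  have hflip : windowCount f (M + n) n = #{l ∈ range n | ¬f (M + l)} := by
    refine congrArg card (filter_congr fun l _ => ?_)
    rw [show M + n + l = M + l + n by ring, hf]; simp
  rw [hflip, windowCount, card_filter_add_card_filter_not, card_range]

lemma windowCount_eq_succ_add_one (hf : ∀ j, f (j + n) = !f j) {M : ℕ} (hM : f M = true) :
    windowCount f M n = windowCount f (M + 1) n + 1 := by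
  have hMn : f (M + n) = false := by rw [hf, hM]; rfl
  have hshift := sum_range_succ' (fun l => if f (M + l) = true then 1 else 0) n
  rw [sum_range_succ] at hshift
  simp only [windowCount, card_filter]
  simp only [hMn, hM, add_zero] at hshift
  simpa [add_assoc, add_comm 1] using hshift

lemma exists_windowCount_lt (hodd : Odd n) (hf : ∀ j, f (j + n) = !f j) {j : ℕ}
    (hj : f j = true) (hj' : f (j + 1) = true) : ∃ M, windowCount f (M + 1) n < (n - 1) / 2 := by
  have h1 := windowCount_eq_succ_add_one hf hj
  have h2 := windowCount_eq_succ_add_one hf hj'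
  have h3 := windowCount_add_windowCount_add_self hf j
  obtain ⟨k, rfl⟩ := hodd
  by_cases hc : windowCount f j (2 * k + 1) ≤ k + 1
  · exact ⟨j + 1, by omega⟩
  · exact ⟨j + 2 * k, by rw [add_assoc]; omega⟩

end BoolSequence

lemma card_filter_range_add_of_periodic {p : ℕ → Prop} [DecidablePred p] {N : ℕ}
    (hp : Periodic p N) (M : ℕ) : #{l ∈ range N | p (M + l)} = #{l ∈ range N | p l} := by
  have hIco : Ico M (M + N) = (range N).map (addLeftEmbedding M) := by
    rw [range_eq_Ico, map_add_left_Ico, add_zero]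
  rw [← Nat.count_eq_card_filter_range p, ← Nat.filter_Ico_card_eq_of_periodic M N p hp, hIco,
    filter_map, card_map]
  rfl

lemma exists_le_lt_succ {s : ℕ → ℝ} {a : ℝ} (h0 : s 0 ≤ a) (h : ∃ M, a < s M) :
    ∃ M, s M ≤ a ∧ a < s (M + 1) := by
  by_contra! hstep
  obtain ⟨M, hM⟩ := h
  exact hM.not_ge (Nat.rec h0 (fun k hk => hstep k hk) M)

section CircularOrder

variable {n : ℕ} [NeZero n]

omit [NeZero n] in
lemma chosen_of_lt (ε : Fin n → Bool) {j : ℕ} (hj : j < n) : chosen ε j = ε ⟨j, hj⟩ := by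
  have hm : j % (2 * n) = j := Nat.mod_eq_of_lt (by omega)
  simp only [chosen, hm, dif_pos hj]

lemma chosen_add_self (ε : Fin n → Bool) (j : ℕ) : chosen ε (j + n) = !chosen ε j := by
  have hn := NeZero.pos n
  have hr : j % (2 * n) < 2 * n := Nat.mod_lt _ (by omega)
  have hmod : (j + n) % (2 * n) = (j % (2 * n) + n) % (2 * n) := by
    conv_lhs => rw [← Nat.mod_add_div j (2 * n)]
    rw [Nat.add_right_comm, Nat.add_mul_mod_self_left]
  by_cases hc : j % (2 * n) < n
  · have h2 : (j % (2 * n) + n) % (2 * n) = j % (2 * n) + n := Nat.mod_eq_of_lt (by omega)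
    simp only [chosen, hmod, h2, dif_neg (show ¬ j % (2 * n) + n < n by omega),
      Nat.add_sub_cancel, dif_pos hc]
  · have h2 : (j % (2 * n) + n) % (2 * n) = j % (2 * n) - n := by
      rw [show j % (2 * n) + n = 2 * n + (j % (2 * n) - n) by omega, Nat.add_mod_left,
        Nat.mod_eq_of_lt (by omega)]
    simp only [chosen, hmod, h2, dif_pos (show j % (2 * n) - n < n by omega), dif_neg hc,
      Bool.not_not]

/-- `pt (circAngle θ j)` is the point `spt θ j`: the circular order of the antipodal point set,
lifted to a sequence of angles that is strictly increasing (`strictMono_circAngle`). -/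
noncomputable def circAngle (θ : Fin n → ℝ) (j : ℕ) : ℝ :=
  θ ⟨j % n, Nat.mod_lt j (NeZero.pos n)⟩ + π * (j / n : ℕ)

variable (θ : Fin n → ℝ)

lemma circAngle_mul_add {r : ℕ} (hr : r < n) (q : ℕ) :
    circAngle θ (n * q + r) = θ ⟨r, hr⟩ + π * q := by
  have hn := NeZero.pos n
  have hθ : (⟨(n * q + r) % n, Nat.mod_lt _ hn⟩ : Fin n) = ⟨r, hr⟩ :=
    Fin.ext (by simp [Nat.mod_eq_of_lt hr])
  rw [circAngle, hθ, Nat.mul_add_div hn, Nat.div_eq_of_lt hr, add_zero]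

lemma circAngle_of_lt {j : ℕ} (hj : j < n) : circAngle θ j = θ ⟨j, hj⟩ := by
  simpa using circAngle_mul_add θ hj 0

lemma circAngle_add_self (j : ℕ) : circAngle θ (j + n) = circAngle θ j + π := by
  have hj := Nat.mod_lt j (NeZero.pos n)
  rw [← Nat.div_add_mod j n, show n * (j / n) + j % n + n = n * (j / n + 1) + j % n by ring,
    circAngle_mul_add θ hj, circAngle_mul_add θ hj]
  push_cast; ring

lemma pt_circAngle_add_two_mul (j : ℕ) :
    pt (circAngle θ (j + 2 * n)) = pt (circAngle θ j) := by
  rw [two_mul, ← add_assoc, circAngle_add_self, circAngle_add_self, pt_add_pi, pt_add_pi,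
    neg_neg]

lemma ncard_setOf_vtx (ε : Fin n → Bool) (P : ℝ × ℝ → Prop) [DecidablePred P]
    (M : ℕ) : {i | P (vtx θ ε i)}.ncard
      = #{l ∈ range (2 * n) | chosen ε (M + l) ∧ P (pt (circAngle θ (M + l)))} := by
  have hper : Periodic (fun j => chosen ε j = true ∧ P (pt (circAngle θ j))) (2 * n) := by
    intro j
    simp only [pt_circAngle_add_two_mul]
    rw [two_mul, ← add_assoc, chosen_add_self, chosen_add_self, Bool.not_not]
  rw [card_filter_range_add_of_periodic hper, Set.ncard_eq_toFinset_card', Set.toFinset_ofPred,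
    card_filter, card_filter, two_mul, sum_range_add, ← sum_add_distrib, sum_range]
  -- vertex `i` is whichever of the points `i`, `i + n` is chosen
  refine sum_congr rfl fun i _ => ?_
  rw [chosen_of_lt ε i.isLt, add_comm n, chosen_add_self, chosen_of_lt ε i.isLt,
    circAngle_add_self, circAngle_of_lt θ i.isLt, pt_add_pi, vtx]
  cases ε i <;> simp

variable {θ}

lemma strictMono_circAngle (hmono : StrictMono θ) (hrange : ∀ i, θ i ∈ Set.Ico 0 π) :
    StrictMono (circAngle θ) := by
  refine strictMono_nat_of_lt_succ fun j => ?_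
  have hj := Nat.mod_lt j (NeZero.pos n)
  rw [← Nat.div_add_mod j n]
  rcases (show j % n + 1 ≤ n from hj).lt_or_eq with hlt | heq
  · rw [add_assoc, circAngle_mul_add θ hj, circAngle_mul_add θ hlt]
    have := hmono (show (⟨j % n, hj⟩ : Fin n) < ⟨j % n + 1, hlt⟩ from Nat.lt_succ_self _)
    linarith
  · have h0 : 0 < n := NeZero.pos n
    rw [add_assoc, heq, show n * (j / n) + n = n * (j / n + 1) + 0 by ring,
      circAngle_mul_add θ hj, circAngle_mul_add θ h0]
    have := (hrange ⟨j % n, hj⟩).2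
    have := (hrange ⟨0, h0⟩).1
    push_cast; nlinarith [pi_pos]

end CircularOrder

section HalfPlanes

variable {n : ℕ} [NeZero n] {θ : Fin n → ℝ}

lemma dotp_pt_circAngle_pos_iff (hmono : StrictMono θ) (hrange : ∀ i, θ i ∈ Set.Ico 0 π)
    {a : ℝ} {M l : ℕ} (ha : circAngle θ M ≤ a) (ha' : a < circAngle θ (M + 1)) (hl : l < 2 * n) :
    0 < dotp (pt (a + π / 2)) (pt (circAngle θ (M + 1 + l))) ↔ circAngle θ (M + 1 + l) < a + π := by
  have hmono' := (strictMono_circAngle hmono hrange).monotone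
  have hlow : a < circAngle θ (M + 1 + l) := ha'.trans_le (hmono' (by omega))
  have hup : circAngle θ (M + 1 + l) ≤ circAngle θ M + 2 * π := by
    rw [two_mul, ← add_assoc, ← circAngle_add_self, ← circAngle_add_self]
    exact hmono' (by omega)
  rw [dotp_pt_pt]
  constructor
  · intro hpos
    by_contra! hge
    exact hpos.not_ge (cos_nonpos_of_pi_div_two_le_of_le (by linarith) (by linarith))
  · intro hlt
    exact cos_pos_of_mem_Ioo ⟨by linarith, by linarith⟩

lemma ncard_halfPlane (hmono : StrictMono θ) (hrange : ∀ i, θ i ∈ Set.Ico 0 π)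
    (ε : Fin n → Bool) {a : ℝ} {M : ℕ} (ha : circAngle θ M ≤ a) (ha' : a < circAngle θ (M + 1)) :
    {i | 0 < dotp (pt (a + π / 2)) (vtx θ ε i)}.ncard
      = #{l ∈ range (2 * n) | chosen ε (M + 1 + l) ∧ circAngle θ (M + 1 + l) < a + π} := by
  rw [ncard_setOf_vtx θ ε (0 < dotp (pt (a + π / 2)) ·) (M + 1)]
  refine congrArg card (filter_congr fun l hl => ?_)
  rw [dotp_pt_circAngle_pos_iff hmono hrange ha ha' (mem_range.1 hl)]

lemma windowCount_le_ncard_halfPlane (hmono : StrictMono θ) (hrange : ∀ i, θ i ∈ Set.Ico 0 π)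
    (ε : Fin n → Bool) {a : ℝ} {M : ℕ} (ha : circAngle θ M ≤ a) (ha' : a < circAngle θ (M + 1)) :
    windowCount (chosen ε) (M + 1) (n - 1) ≤ {i | 0 < dotp (pt (a + π / 2)) (vtx θ ε i)}.ncard := by
  rw [ncard_halfPlane hmono hrange ε ha ha']
  refine card_le_card fun l hl => ?_
  simp only [mem_filter, mem_range] at hl ⊢
  refine ⟨by omega, hl.2, ?_⟩
  calc circAngle θ (M + 1 + l) < circAngle θ (M + n) :=
        strictMono_circAngle hmono hrange (by omega)
    _ ≤ a + π := by rw [circAngle_add_self]; linarith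

lemma ncard_halfPlane_eq_windowCount (hmono : StrictMono θ) (hrange : ∀ i, θ i ∈ Set.Ico 0 π)
    (ε : Fin n → Bool) (M : ℕ) :
    {i | 0 < dotp (pt ((circAngle θ M + circAngle θ (M + 1)) / 2 + π / 2)) (vtx θ ε i)}.ncard
      = windowCount (chosen ε) (M + 1) n := by
  have hmono' := strictMono_circAngle hmono hrange
  have hM : circAngle θ M < circAngle θ (M + 1) := hmono' (by omega)
  rw [ncard_halfPlane hmono hrange ε (M := M) (by linarith) (by linarith), windowCount]
  congr 1
  ext l
  simp only [mem_filter, mem_range]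
  have hlt_iff : l < 2 * n →
      (circAngle θ (M + 1 + l) < (circAngle θ M + circAngle θ (M + 1)) / 2 + π ↔ l < n) := by
    intro hl
    constructor
    · intro h
      by_contra! hnl
      have := hmono'.monotone (show M + 1 + n ≤ M + 1 + l by omega)
      rw [circAngle_add_self] at this
      linarith
    · intro hnl
      have := hmono'.monotone (show M + 1 + l ≤ M + n by omega)
      rw [circAngle_add_self] at this
      linarith
  constructor
  · rintro ⟨hl, hc, hang⟩
    exact ⟨(hlt_iff hl).1 hang, hc⟩
  · rintro ⟨hl, hc⟩
    exact ⟨by omega, hc, (hlt_iff (by omega)).2 hl⟩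

lemma exists_circAngle_le_lt (b : ℝ) :
    ∃ a M, pt (a + π / 2) = pt b ∧ circAngle θ M ≤ a ∧ a < circAngle θ (M + 1) := by
  obtain ⟨k, hk, -⟩ := existsUnique_add_zsmul_mem_Ico two_pi_pos (b - π / 2) (circAngle θ 0)
  have hpt : pt (b - π / 2 + k • (2 * π) + π / 2) = pt b := by
    rw [zsmul_eq_mul, show b - π / 2 + k * (2 * π) + π / 2 = b + k * (2 * π) by ring,
      pt_add_int_mul_two_pi]
  have hwrap : b - π / 2 + k • (2 * π) < circAngle θ (0 + n + n) := by
    rw [circAngle_add_self, circAngle_add_self]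
    linarith [hk.2]
  obtain ⟨M, hM⟩ := exists_le_lt_succ hk.1 ⟨_, hwrap⟩
  exact ⟨_, M, hpt, hM⟩

lemma thick_of_alternating (hodd : Odd n) (hmono : StrictMono θ)
    (hrange : ∀ i, θ i ∈ Set.Ico 0 π) {ε : Fin n → Bool}
    (halt : ∀ j, chosen ε (j + 1) = !chosen ε j) : Thick θ ε := by
  intro v hv
  obtain ⟨r, hr, b, rfl⟩ := exists_pos_smul_pt hv
  obtain ⟨a, M, hab, ha, ha'⟩ := exists_circAngle_le_lt (θ := θ) b
  have hset : {i | 0 < dotp (r • pt b) (vtx θ ε i)}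
      = {i | 0 < dotp (pt (a + π / 2)) (vtx θ ε i)} := by
    simp only [dotp_smul_left, mul_pos_iff_of_pos_left hr, hab]
  obtain ⟨k, rfl⟩ := hodd
  calc (2 * k + 1 - 1) / 2 = windowCount (chosen ε) (M + 1) (2 * k) := by
        rw [windowCount_two_mul_of_alternating halt]; omega
    _ ≤ _ := hset ▸ windowCount_le_ncard_halfPlane hmono hrange ε ha ha'

lemma not_thick_of_adjacent (hodd : Odd n) (hmono : StrictMono θ)
    (hrange : ∀ i, θ i ∈ Set.Ico 0 π) {ε : Fin n → Bool} {j : ℕ}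
    (hj : chosen ε j = true) (hj' : chosen ε (j + 1) = true) : ¬ Thick θ ε := by
  intro hthick
  obtain ⟨M, hM⟩ := exists_windowCount_lt hodd (chosen_add_self ε) hj hj'
  have hcount := hthick _ (pt_ne_zero ((circAngle θ M + circAngle θ (M + 1)) / 2 + π / 2))
  rw [ncard_halfPlane_eq_windowCount hmono hrange ε M] at hcount
  omega

end HalfPlanes

/-- For n odd, an antipodal polygon is thick iff no two points of S adjacent in
circular order are both vertices of it. -/
theorem stmt_19 (n : ℕ) (hodd : Odd n) (θ : Fin n → ℝ) (hmono : StrictMono θ)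
    (hrange : ∀ i, θ i ∈ Set.Ico 0 Real.pi) (ε : Fin n → Bool) :
    Thick θ ε ↔ ∀ j : ℕ, ¬ (chosen ε j = true ∧ chosen ε (j + 1) = true) := by
  have : NeZero n := ⟨hodd.pos.ne'⟩
  refine ⟨fun hthick j hj => not_thick_of_adjacent hodd hmono hrange hj.1 hj.2 hthick,
    fun hadj => thick_of_alternating hodd hmono hrange ?_⟩
  exact succ_eq_not_of_antiperiodic (chosen_add_self ε) hadj
end
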